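/- arXiv:1606.04502 — 11 statements merged into one kernel-verified Lean document; each statement's English description precedes it below -/
import Mathlib

section
/- For n ≥ 1, the number of primitive (aperiodic) necklaces of length n over an alphabet of k letters equals (1/n) · Σ_{d | n} μ(d) · k^(n/d), where μ is the Möbius function. -/
/-- Two words are rotation-equivalent if one is a cyclic rotation of the other. -/
def rotEquiv {n k : ℕ} (s t : ZMod n → Fin k) : Prop :=
  ∃ r : ZMod n, t = fun i => s (i + r)

/-- The setoid of words under cyclic rotation; equivalence classes are necklaces. -/
def rotSetoid (n k : ℕ) : Setoid (ZMod n → Fin k) where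
  r := rotEquiv
  iseqv := by
    constructor
    · intro s; exact ⟨0, by funext i; simp⟩
    · rintro s t ⟨r, rfl⟩; exact ⟨-r, by funext i; simp⟩
    · rintro s t u ⟨r, rfl⟩ ⟨r', rfl⟩
      exact ⟨r' + r, by funext i; simp [add_assoc]⟩

/-- A necklace of length `n` on `k` letters. -/
def Necklace (n k : ℕ) : Type := Quotient (rotSetoid n k)

/-- A word is primitive (aperiodic) if no nontrivial cyclic rotation fixes it,
equivalently it is not the concatenation of `r > 1` copies of a shorter word. -/
def IsPrimitiveWord {n k : ℕ} (s : ZMod n → Fin k) : Prop :=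
  ∀ r : ZMod n, r ≠ 0 → (fun i => s (i + r)) ≠ s

namespace NeckAux

variable {n k : ℕ}

/-- `s` is invariant under cyclic shift by `m`. -/
def Shifts (s : ZMod n → Fin k) (m : ℕ) : Prop := ∀ i, s (i + (m : ZMod n)) = s i

theorem shifts_n (s : ZMod n → Fin k) : Shifts s n := by
  intro i; simp

theorem shifts_mul {s : ZMod n → Fin k} {a : ℕ} (ha : Shifts s a) (t : ℕ) :
    Shifts s (t * a) := by
  induction t with
  | zero => intro i; simp
  | succ t ih =>
      intro i
      have h1 : ((t + 1) * a : ℕ) = a + t * a := by ring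
      rw [h1, Nat.cast_add, ← add_assoc]
      rw [ih (i + (a : ZMod n))]
      exact ha i

open Classical in
/-- Minimal positive period of a word. -/
noncomputable def per [NeZero n] (s : ZMod n → Fin k) : ℕ :=
  Nat.find (p := fun m => 0 < m ∧ Shifts s m)
    ⟨n, Nat.pos_of_ne_zero (NeZero.ne n), shifts_n s⟩

theorem per_pos [NeZero n] (s : ZMod n → Fin k) : 0 < per s := by
  classical
  exact (Nat.find_spec (p := fun m => 0 < m ∧ Shifts s m)
    ⟨n, Nat.pos_of_ne_zero (NeZero.ne n), shifts_n s⟩).1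

theorem per_shifts [NeZero n] (s : ZMod n → Fin k) : Shifts s (per s) := by
  classical
  exact (Nat.find_spec (p := fun m => 0 < m ∧ Shifts s m)
    ⟨n, Nat.pos_of_ne_zero (NeZero.ne n), shifts_n s⟩).2

theorem per_min [NeZero n] {s : ZMod n → Fin k} {m : ℕ} (hm : m < per s) :
    ¬ (0 < m ∧ Shifts s m) := by
  classical
  exact Nat.find_min _ hm

theorem per_dvd_of_shifts [NeZero n] {s : ZMod n → Fin k} {a : ℕ} (h : Shifts s a) :
    per s ∣ a := by
  have key : Shifts s (a % per s) := by
    intro i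
    have h1 := shifts_mul (per_shifts s) (a / per s) (i + ((a % per s : ℕ) : ZMod n))
    have h2 : i + ((a % per s : ℕ) : ZMod n) + ((a / per s * per s : ℕ) : ZMod n)
        = i + (a : ZMod n) := by
      rw [add_assoc, ← Nat.cast_add, Nat.mod_add_div']
    rw [h2] at h1
    rw [← h1, h i]
  rcases Nat.eq_zero_or_pos (a % per s) with h0 | h0
  · exact Nat.dvd_of_mod_eq_zero h0
  · exact absurd ⟨h0, key⟩ (per_min (Nat.mod_lt _ (per_pos s)))

theorem per_dvd [NeZero n] (s : ZMod n → Fin k) : per s ∣ n :=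
  per_dvd_of_shifts (shifts_n s)

theorem shifts_val_iff [NeZero n] {s : ZMod n → Fin k} {r : ZMod n} :
    (fun i => s (i + r)) = s ↔ Shifts s r.val := by
  constructor
  · intro h i
    rw [ZMod.natCast_zmod_val]
    exact congrFun h i
  · intro h
    funext i
    have := h i
    rwa [ZMod.natCast_zmod_val] at this

theorem prim_iff_per_eq [NeZero n] (s : ZMod n → Fin k) :
    IsPrimitiveWord s ↔ per s = n := by
  constructor
  · intro hp
    by_contra hne
    have hlt : per s < n := lt_of_le_of_ne (Nat.le_of_dvd (Nat.pos_of_ne_zero (NeZero.ne n)) (per_dvd s)) hne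
    have hr : ((per s : ℕ) : ZMod n) ≠ 0 := by
      rw [Ne, ZMod.natCast_eq_zero_iff]
      intro hdvd
      exact absurd (Nat.le_of_dvd (per_pos s) hdvd) (not_le.mpr hlt)
    refine hp _ hr ?_
    funext i
    exact per_shifts s i
  · intro hpn r hr heq
    have h1 : Shifts s r.val := shifts_val_iff.mp heq
    have h2 : per s ∣ r.val := per_dvd_of_shifts h1
    rw [hpn] at h2
    have h3 : r.val = 0 := Nat.eq_zero_of_dvd_of_lt h2 (ZMod.val_lt r)
    exact hr (by rw [← ZMod.natCast_zmod_val r, h3, Nat.cast_zero])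

end NeckAux

namespace NeckAux

variable {n k : ℕ}

/-- Expand a word of length `d` to a word of length `n` by repetition. -/
def expand {d : ℕ} (h : d ∣ n) (g : ZMod d → Fin k) : ZMod n → Fin k :=
  fun i => g (ZMod.castHom h (ZMod d) i)

/-- Restrict a word of length `n` to a word of length `d`. -/
def downTo (d : ℕ) (s : ZMod n → Fin k) : ZMod d → Fin k :=
  fun j => s ((j.val : ZMod n))

theorem expand_shifts_iff [NeZero n] {d : ℕ} [NeZero d] (h : d ∣ n) (g : ZMod d → Fin k)
    (a : ℕ) : Shifts (expand h g) a ↔ ∀ j : ZMod d, g (j + (a : ZMod d)) = g j := by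
  constructor
  · intro H j
    have h1 := H ((j.val : ZMod n))
    simp only [expand] at h1
    rwa [map_add, map_natCast, map_natCast, ZMod.natCast_zmod_val] at h1
  · intro H i
    simp only [expand]
    rw [map_add, map_natCast]
    exact H _

theorem downTo_expand [NeZero n] {d : ℕ} [NeZero d] (h : d ∣ n) (g : ZMod d → Fin k) :
    downTo d (expand h g) = g := by
  funext j
  simp only [downTo, expand]
  rw [map_natCast, ZMod.natCast_zmod_val]

theorem per_expand [NeZero n] {d : ℕ} [NeZero d] (h : d ∣ n) {g : ZMod d → Fin k}
    (hg : IsPrimitiveWord g) : per (expand h g) = d := by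
  have h1 : Shifts (expand h g) d := by
    rw [expand_shifts_iff]
    intro j; simp
  have h2 : per (expand h g) ∣ d := per_dvd_of_shifts h1
  have h3 : d ∣ per (expand h g) := by
    have h4 := (expand_shifts_iff h g _).mp (per_shifts (expand h g))
    by_contra hnd
    have hne : ((per (expand h g) : ℕ) : ZMod d) ≠ 0 := by
      rwa [Ne, ZMod.natCast_eq_zero_iff]
    exact hg _ hne (funext h4)
  exact Nat.dvd_antisymm h2 h3

theorem expand_downTo [NeZero n] {s : ZMod n → Fin k} {d : ℕ} (hd : per s = d)
    (h : d ∣ n) : expand h (downTo d s) = s := by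
  funext i
  simp only [expand, downTo]
  have hd0 : 0 < d := hd ▸ per_pos s
  haveI : NeZero d := ⟨hd0.ne'⟩
  have h1 : ZMod.castHom h (ZMod d) i = ((i.val : ℕ) : ZMod d) := by
    conv_lhs => rw [← ZMod.natCast_zmod_val i]
    rw [map_natCast]
  rw [h1, ZMod.val_natCast]
  have h2 : ((i.val % d + i.val / d * d : ℕ) : ZMod n) = (i.val : ZMod n) := by
    rw [Nat.mod_add_div']
  have h3 := shifts_mul (hd ▸ per_shifts s) (i.val / d) (((i.val % d : ℕ) : ZMod n))
  rw [Nat.cast_add] at h2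
  rw [h2] at h3
  rw [← h3, ZMod.natCast_zmod_val]

theorem prim_downTo [NeZero n] {s : ZMod n → Fin k} {d : ℕ} (hd : per s = d) :
    IsPrimitiveWord (downTo d s) := by
  have hd0 : 0 < d := hd ▸ per_pos s
  haveI : NeZero d := ⟨hd0.ne'⟩
  intro r hr heq
  have hdn : d ∣ n := by rw [← hd]; exact per_dvd s
  have h1 : Shifts s r.val := by
    have h2 : Shifts (expand hdn (downTo d s)) r.val := by
      rw [expand_shifts_iff]
      intro j
      rw [ZMod.natCast_zmod_val]
      exact congrFun heq j
    rwa [expand_downTo hd] at h2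
  have h3 : d ∣ r.val := by
    have h5 := per_dvd_of_shifts h1
    rwa [hd] at h5
  have h4 : r.val = 0 := Nat.eq_zero_of_dvd_of_lt h3 (ZMod.val_lt r)
  exact hr (by rw [← ZMod.natCast_zmod_val r, h4, Nat.cast_zero])

/-- Words of length `n` with exact period `d` are in bijection with primitive words
of length `d`. -/
noncomputable def perEquiv [NeZero n] {d : ℕ} (h : d ∣ n) [NeZero d] :
    {s : ZMod n → Fin k // per s = d} ≃ {g : ZMod d → Fin k // IsPrimitiveWord g} where
  toFun s := ⟨downTo d s.1, prim_downTo s.2⟩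
  invFun g := ⟨expand h g.1, per_expand h g.2⟩
  left_inv s := Subtype.ext (expand_downTo s.2 h)
  right_inv g := Subtype.ext (downTo_expand h g.1)

end NeckAux

namespace NeckAux

/-- Number of primitive words of length `d` on `k` letters. -/
noncomputable def P (k d : ℕ) : ℕ := Nat.card {g : ZMod d → Fin k // IsPrimitiveWord g}

theorem sum_P (k : ℕ) : ∀ n > 0, ∑ d ∈ n.divisors, P k d = k ^ n := by
  intro n hn
  haveI : NeZero n := ⟨hn.ne'⟩
  classical
  have h1 : (Finset.univ : Finset (ZMod n → Fin k)).card
      = ∑ d ∈ n.divisors, (Finset.univ.filter (fun s : ZMod n → Fin k => per s = d)).card := by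
    apply Finset.card_eq_sum_card_fiberwise
    intro s _
    exact Nat.mem_divisors.mpr ⟨per_dvd s, hn.ne'⟩
  have h2 : (Finset.univ : Finset (ZMod n → Fin k)).card = k ^ n := by
    rw [Finset.card_univ, Fintype.card_fun, ZMod.card, Fintype.card_fin]
  have h3 : ∀ d ∈ n.divisors,
      (Finset.univ.filter (fun s : ZMod n → Fin k => per s = d)).card = P k d := by
    intro d hd
    haveI : NeZero d := ⟨(Nat.pos_of_mem_divisors hd).ne'⟩
    rw [← Fintype.card_subtype, ← Nat.card_eq_fintype_card, P]
    exact Nat.card_congr (perEquiv (Nat.dvd_of_mem_divisors hd))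
  rw [← h2, h1]
  exact (Finset.sum_congr rfl h3).symm

theorem P_eq_moebius_sum (n k : ℕ) (hn : 0 < n) :
    (P k n : ℚ) = ∑ d ∈ n.divisors,
      (ArithmeticFunction.moebius d : ℚ) * (k : ℚ) ^ (n / d) := by
  have H := (ArithmeticFunction.sum_eq_iff_sum_smul_moebius_eq (R := ℚ)
    (f := fun d => (P k d : ℚ)) (g := fun m => (k : ℚ) ^ m)).mp ?_ n hn
  · rw [← H, ← Nat.sum_divisorsAntidiagonal
      (fun d e => (ArithmeticFunction.moebius d : ℚ) * (k : ℚ) ^ e)]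
    apply Finset.sum_congr rfl
    intro x _
    rw [zsmul_eq_mul]
  · intro m hm
    rw [← Nat.cast_sum, sum_P k m hm, Nat.cast_pow]

end NeckAux

namespace NeckAux

variable {n k : ℕ}

theorem prim_rot {s : ZMod n → Fin k} (hs : IsPrimitiveWord s) (r : ZMod n) :
    IsPrimitiveWord (fun i => s (i + r)) := by
  intro r' hr' heq
  apply hs r' hr'
  funext j
  have h1 : s (j - r + r' + r) = s (j - r + r) := congrFun heq (j - r)
  have e1 : j - r + r' + r = j + r' := by ring
  have e2 : j - r + r = j := by ring
  rwa [e1, e2] at h1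

theorem prim_of_rotEquiv {s t : ZMod n → Fin k} (h : rotEquiv s t)
    (hs : IsPrimitiveWord s) : IsPrimitiveWord t := by
  obtain ⟨r, rfl⟩ := h
  exact prim_rot hs r

theorem out_prim (x : {x : Necklace n k // ∃ s : ZMod n → Fin k,
    IsPrimitiveWord s ∧ Quotient.mk (rotSetoid n k) s = x}) :
    IsPrimitiveWord (Quotient.out x.1) := by
  obtain ⟨s, hs, hmk⟩ := x.2
  have h1 : Quotient.mk (rotSetoid n k) s = Quotient.mk (rotSetoid n k) (Quotient.out x.1) := by
    rw [hmk]
    exact (Quotient.out_eq (s := rotSetoid n k) x.1).symm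
  exact prim_of_rotEquiv (Quotient.exact h1) hs

/-- Rotations act freely and transitively on each primitive necklace class. -/
noncomputable def orbitEquiv (n k : ℕ) :
    ({x : Necklace n k // ∃ s : ZMod n → Fin k,
        IsPrimitiveWord s ∧ Quotient.mk (rotSetoid n k) s = x} × ZMod n)
      ≃ {s : ZMod n → Fin k // IsPrimitiveWord s} := by
  apply Equiv.ofBijective
    (fun p => ⟨fun i => (Quotient.out p.1.1) (i + p.2), prim_rot (out_prim p.1) p.2⟩)
  constructor
  · rintro ⟨⟨x, hx⟩, r⟩ ⟨⟨y, hy⟩, r'⟩ h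
    have hval : (fun i => (Quotient.out x) (i + r)) = fun i => (Quotient.out y) (i + r') :=
      congrArg Subtype.val h
    have hxy : x = y := by
      rw [← Quotient.out_eq x, ← Quotient.out_eq y]
      apply Quotient.sound
      refine ⟨r - r', ?_⟩
      funext j
      have h1 : (Quotient.out x) (j - r' + r) = (Quotient.out y) (j - r' + r') :=
        congrFun hval (j - r')
      have e1 : j - r' + r = j + (r - r') := by ring
      have e2 : j - r' + r' = j := by ring
      rw [e1, e2] at h1
      exact h1.symm
    subst hxy
    have hrr : r = r' := by
      by_contra hne
      apply out_prim ⟨x, hx⟩ (r - r') (by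
        intro h0
        exact hne (sub_eq_zero.mp h0))
      funext j
      have h1 : (Quotient.out x) (j - r' + r) = (Quotient.out x) (j - r' + r') :=
        congrFun hval (j - r')
      have e1 : j - r' + r = j + (r - r') := by ring
      have e2 : j - r' + r' = j := by ring
      rwa [e1, e2] at h1
    subst hrr
    rfl
  · rintro ⟨s, hs⟩
    refine ⟨⟨⟨Quotient.mk (rotSetoid n k) s, ⟨s, hs, rfl⟩⟩, ?_⟩, ?_⟩
    · exact Classical.choose (Quotient.exact
        ((Quotient.out_eq (Quotient.mk (rotSetoid n k) s)) :
          Quotient.mk (rotSetoid n k) _ = Quotient.mk (rotSetoid n k) s))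
    · apply Subtype.ext
      exact (Classical.choose_spec (Quotient.exact
        ((Quotient.out_eq (Quotient.mk (rotSetoid n k) s)) :
          Quotient.mk (rotSetoid n k) _ = Quotient.mk (rotSetoid n k) s))).symm

end NeckAux


/-- the number of primitive necklaces of length `n` on `k` letters is
`(1/n) · Σ_{d | n} μ(d) k^(n/d)`. -/
theorem stmt_0 (n k : ℕ) (hn : 1 ≤ n) :
    (Nat.card {x : Necklace n k // ∃ s : ZMod n → Fin k,
        IsPrimitiveWord s ∧ Quotient.mk (rotSetoid n k) s = x} : ℚ) =
      (1 / n) * ∑ d ∈ n.divisors,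
        (ArithmeticFunction.moebius d : ℚ) * (k : ℚ) ^ (n / d) := by
  haveI : NeZero n := ⟨by omega⟩
  have hcard : Nat.card {x : Necklace n k // ∃ s : ZMod n → Fin k,
      IsPrimitiveWord s ∧ Quotient.mk (rotSetoid n k) s = x} * n = NeckAux.P k n := by
    have h := Nat.card_congr (NeckAux.orbitEquiv n k)
    rwa [Nat.card_prod, Nat.card_zmod] at h
  have hP := NeckAux.P_eq_moebius_sum n k hn
  rw [← hP]
  have hn0 : (n : ℚ) ≠ 0 := Nat.cast_ne_zero.mpr (by omega)
  field_simp
  have := congrArg (Nat.cast (R := ℚ)) hcard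
  push_cast at this
  linarith [this]
end

section
/- For n ≥ 1 and 0 ≤ i ≤ n, the number of binary primitive necklaces of length n with exactly i ones equals (1/n) · Σ_{d | gcd(n,i)} μ(d) · C(n/d, i/d). -/
noncomputable def numOnes {n : ℕ} (s : ZMod n → Fin 2) : ℕ := Nat.card {i : ZMod n // s i = 1}

/-- `L_2(n,i)`: the number of primitive binary necklaces of length `n` with `i` ones. -/
noncomputable def L2 (n i : ℕ) : ℕ :=
  Nat.card {x : Necklace n 2 // ∃ s : ZMod n → Fin 2,
    IsPrimitiveWord s ∧ numOnes s = i ∧ Quotient.mk (rotSetoid n 2) s = x}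

open Function

namespace NecklaceAux

variable {n : ℕ}

def rot {n k : ℕ} (r : ZMod n) (s : ZMod n → Fin k) : ZMod n → Fin k := fun i => s (i + r)

lemma rot_zero {k : ℕ} (s : ZMod n → Fin k) : rot (0 : ZMod n) s = s := by
  funext i; simp [rot]

lemma rot_rot {k : ℕ} (r r' : ZMod n) (s : ZMod n → Fin k) :
    rot r' (rot r s) = rot (r + r') s := by
  funext i; simp [rot, add_assoc, add_comm r r']

lemma isPrimitiveWord_iff {k : ℕ} (s : ZMod n → Fin k) :
    IsPrimitiveWord s ↔ ∀ r : ZMod n, r ≠ 0 → rot r s ≠ s := Iff.rfl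

lemma numOnes_rot (r : ZMod n) (s : ZMod n → Fin 2) : numOnes (rot r s) = numOnes s := by
  unfold numOnes
  exact Nat.card_congr (Equiv.subtypeEquiv (Equiv.addRight r) (fun i => Iff.rfl))

lemma prim_rot {s : ZMod n → Fin 2} (hs : IsPrimitiveWord s) (r : ZMod n) :
    IsPrimitiveWord (rot r s) := by
  intro r' hr' h
  apply hs r' hr'
  funext j
  have := congrFun h (j - r)
  simpa [rot, sub_add_cancel, sub_add_eq_add_sub, add_sub_cancel_right] using this

lemma rot_eq_self {s : ZMod n → Fin 2} (hs : IsPrimitiveWord s) (r : ZMod n) :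
    rot r s = s ↔ r = 0 := by
  constructor
  · intro h; by_contra hr; exact hs r hr h
  · rintro rfl; exact rot_zero s

/-- Part A: the number of primitive words with `i` ones is `n` times the number of
primitive necklaces with `i` ones. -/
lemma card_prim_words (n i : ℕ) [NeZero n] :
    Nat.card {s : ZMod n → Fin 2 // IsPrimitiveWord s ∧ numOnes s = i} = L2 n i * n := by
  classical
  set X := {x : Necklace n 2 // ∃ s : ZMod n → Fin 2,
    IsPrimitiveWord s ∧ numOnes s = i ∧ Quotient.mk (rotSetoid n 2) s = x} with hX
  have key : ∀ x : X, IsPrimitiveWord x.2.choose ∧ numOnes x.2.choose = i ∧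
      Quotient.mk (rotSetoid n 2) x.2.choose = x.1 := fun x => x.2.choose_spec
  let Φ : X × ZMod n → {s : ZMod n → Fin 2 // IsPrimitiveWord s ∧ numOnes s = i} :=
    fun p => ⟨rot p.2 p.1.2.choose,
      prim_rot (key p.1).1 p.2, by rw [numOnes_rot]; exact (key p.1).2.1⟩
  have hmk : ∀ (s : ZMod n → Fin 2) (r : ZMod n),
      Quotient.mk (rotSetoid n 2) (rot r s) = Quotient.mk (rotSetoid n 2) s := by
    intro s r
    exact (Quotient.sound (⟨r, rfl⟩ : rotEquiv s (rot r s))).symm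
  have hinj : Function.Injective Φ := by
    rintro ⟨x, r⟩ ⟨x', r'⟩ h
    have h' : rot r x.2.choose = rot r' x'.2.choose := congrArg Subtype.val h
    have hxx : x = x' := by
      apply Subtype.ext
      calc (show Quotient (rotSetoid n 2) from x.1) = Quotient.mk (rotSetoid n 2) x.2.choose := (key x).2.2.symm
        _ = Quotient.mk (rotSetoid n 2) (rot r x.2.choose) := (hmk _ r).symm
        _ = Quotient.mk (rotSetoid n 2) (rot r' x'.2.choose) := by rw [h']
        _ = Quotient.mk (rotSetoid n 2) x'.2.choose := hmk _ r'
        _ = (show Quotient (rotSetoid n 2) from x'.1) := (key x').2.2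
    subst hxx
    have h2 : rot (r + -r') x.2.choose = x.2.choose := by
      rw [← rot_rot, h', rot_rot, add_neg_cancel, rot_zero]
    have := (rot_eq_self (key x).1 _).mp h2
    have : r = r' := by linear_combination (norm := abel_nf) this
    simp [this]
  have hsurj : Function.Surjective Φ := by
    rintro ⟨s, hp, ho⟩
    set x : X := ⟨Quotient.mk (rotSetoid n 2) s, s, hp, ho, rfl⟩ with hxdef
    have : Quotient.mk (rotSetoid n 2) x.2.choose = Quotient.mk (rotSetoid n 2) s :=
      (key x).2.2
    obtain ⟨r, hr⟩ : rotEquiv x.2.choose s := Quotient.exact this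
    exact ⟨⟨x, r⟩, Subtype.ext hr.symm⟩
  have := Nat.card_eq_of_bijective Φ ⟨hinj, hsurj⟩
  rw [← this, Nat.card_prod, Nat.card_zmod]
  rfl

end NecklaceAux
section PartB

open Function Finset

namespace NecklaceAux

variable {n k : ℕ}

/-- Expand a word of length `k` to a word of length `n` by repeating it `n/k` times. -/
def expandW (h : k ∣ n) (s : ZMod k → Fin 2) : ZMod n → Fin 2 :=
  fun i => s (ZMod.castHom h (ZMod k) i)

lemma castHom_surj [NeZero k] (h : k ∣ n) : Function.Surjective (ZMod.castHom h (ZMod k)) := by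
  intro j
  exact ⟨(j.val : ZMod n), by rw [map_natCast]; exact ZMod.natCast_rightInverse j⟩

lemma expandW_injective [NeZero k] (h : k ∣ n) : Function.Injective (expandW (n := n) h) := by
  intro s s' he
  funext j
  obtain ⟨i, rfl⟩ := castHom_surj h j
  exact congrFun he i

lemma rot_expandW (h : k ∣ n) (r : ZMod n) (s : ZMod k → Fin 2) :
    rot r (expandW h s) = expandW h (rot (ZMod.castHom h (ZMod k) r) s) := by
  funext i; simp [rot, expandW, map_add]

lemma iterate_rot (j : ℕ) (t : ZMod n → Fin 2) :
    (rot (1 : ZMod n))^[j] t = rot (j : ZMod n) t := by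
  induction j with
  | zero => simp [rot_zero]
  | succ j ih =>
      rw [Function.iterate_succ_apply', ih, rot_rot]
      norm_cast

lemma isPeriodicPt_iff (j : ℕ) (t : ZMod n → Fin 2) :
    Function.IsPeriodicPt (rot (1 : ZMod n)) j t ↔ rot (j : ZMod n) t = t := by
  rw [Function.IsPeriodicPt, Function.IsFixedPt, iterate_rot]

lemma isPeriodicPt_n [NeZero n] (t : ZMod n → Fin 2) :
    Function.IsPeriodicPt (rot (1 : ZMod n)) n t := by
  rw [isPeriodicPt_iff, ZMod.natCast_self, rot_zero]

lemma mem_periodicPts [NeZero n] (t : ZMod n → Fin 2) :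
    t ∈ Function.periodicPts (rot (1 : ZMod n)) :=
  ⟨n, Nat.pos_of_ne_zero (NeZero.ne n), isPeriodicPt_n t⟩

lemma isPeriodicPt_expandW_iff [NeZero n] [NeZero k] (h : k ∣ n) {s : ZMod k → Fin 2}
    (hs : IsPrimitiveWord s) (j : ℕ) :
    Function.IsPeriodicPt (rot (1 : ZMod n)) j (expandW h s) ↔ k ∣ j := by
  rw [isPeriodicPt_iff, rot_expandW]
  have hπ : (ZMod.castHom h (ZMod k)) ((j : ℕ) : ZMod n) = (j : ZMod k) := map_natCast _ j
  constructor
  · intro he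
    have h2 : rot ((j : ZMod k)) s = s := by
      rw [← hπ]; exact expandW_injective h he
    have := (rot_eq_self hs _).mp h2
    exact (ZMod.natCast_eq_zero_iff j k).mp this
  · intro hd
    have : ((j : ℕ) : ZMod k) = 0 := (ZMod.natCast_eq_zero_iff j k).mpr hd
    rw [hπ, this, rot_zero]

lemma minimalPeriod_expandW [NeZero n] [NeZero k] (h : k ∣ n) {s : ZMod k → Fin 2}
    (hs : IsPrimitiveWord s) :
    Function.minimalPeriod (rot (1 : ZMod n)) (expandW h s) = k := by
  have h1 : k ∣ Function.minimalPeriod (rot (1 : ZMod n)) (expandW h s) :=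
    (isPeriodicPt_expandW_iff h hs _).mp (Function.isPeriodicPt_minimalPeriod _ _)
  have h2 : Function.minimalPeriod (rot (1 : ZMod n)) (expandW h s) ∣ k :=
    Function.IsPeriodicPt.minimalPeriod_dvd ((isPeriodicPt_expandW_iff h hs k).mpr dvd_rfl)
  exact Nat.dvd_antisymm h2 h1

lemma exists_decomp [NeZero n] (t : ZMod n → Fin 2) :
    ∃ h : Function.minimalPeriod (rot (1 : ZMod n)) t ∣ n,
      ∃ s : ZMod (Function.minimalPeriod (rot (1 : ZMod n)) t) → Fin 2,
      IsPrimitiveWord s ∧ t = expandW h s := by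
  set m := Function.minimalPeriod (rot (1 : ZMod n)) t with hm
  have hm0 : 0 < m := Function.minimalPeriod_pos_of_mem_periodicPts (mem_periodicPts t)
  haveI : NeZero m := ⟨hm0.ne'⟩
  have hdvd : m ∣ n := Function.IsPeriodicPt.minimalPeriod_dvd (isPeriodicPt_n t)
  set s : ZMod m → Fin 2 := fun j => t ((j.val : ZMod n)) with hsdef
  have hfac : t = expandW hdvd s := by
    have hrot : rot ((m : ℕ) : ZMod n) t = t :=
      (isPeriodicPt_iff m t).mp (Function.isPeriodicPt_minimalPeriod _ _)
    have hper : ∀ (x : ZMod n) (c : ℕ), t (x + ((m * c : ℕ) : ZMod n)) = t x := by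
      intro x c
      induction c with
      | zero => simp
      | succ c ih =>
          have h1 := congrFun hrot (x + ((m * c : ℕ) : ZMod n))
          simp only [rot] at h1
          calc t (x + ((m * (c+1) : ℕ) : ZMod n))
              = t (x + ((m * c : ℕ) : ZMod n) + ((m : ℕ) : ZMod n)) := by
                push_cast; ring_nf
            _ = t (x + ((m * c : ℕ) : ZMod n)) := h1
            _ = t x := ih
    funext i
    show t i = t ((((ZMod.castHom hdvd (ZMod m)) i).val : ZMod n))
    have hv : ((ZMod.castHom hdvd (ZMod m)) i).val = i.val % m := by
      rw [ZMod.castHom_apply, ← ZMod.natCast_val, ZMod.val_natCast]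
    rw [hv]
    conv_lhs => rw [← ZMod.natCast_rightInverse (n := n) i]
    have h3 : (i.val : ZMod n) = ((i.val % m : ℕ) : ZMod n) + ((m * (i.val / m) : ℕ) : ZMod n) := by
      rw [← Nat.cast_add, Nat.mod_add_div]
    rw [h3, hper]
  refine ⟨hdvd, s, ?_, hfac⟩
  intro ρ hρ heq
  have hval : 0 < ρ.val := by
    rcases Nat.eq_zero_or_pos ρ.val with h0 | h0
    · exact absurd ((ZMod.val_eq_zero ρ).mp h0) hρ
    · exact h0
  have hlt : ρ.val < m := ZMod.val_lt ρ
  have h1 : rot ((ρ.val : ℕ) : ZMod n) t = t := by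
    conv_lhs => rw [hfac, rot_expandW]
    have hπ : (ZMod.castHom hdvd (ZMod m)) ((ρ.val : ℕ) : ZMod n) = ρ := by
      rw [map_natCast]; exact ZMod.natCast_rightInverse ρ
    rw [hπ]
    have heq2 : rot ρ s = s := heq
    rw [heq2, ← hfac]
  have h2 : Function.IsPeriodicPt (rot (1 : ZMod n)) ρ.val t := (isPeriodicPt_iff _ t).mpr h1
  have := Function.IsPeriodicPt.minimalPeriod_le hval h2
  omega

end NecklaceAux

end PartB
section PartC

open Function Finset

namespace NecklaceAux

variable {n k : ℕ}

lemma card_fiber [NeZero n] [NeZero k] (h : k ∣ n) (j : ZMod k) :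
    (Finset.univ.filter fun i : ZMod n => ZMod.castHom h (ZMod k) i = j).card = n / k := by
  classical
  set π := ZMod.castHom h (ZMod k) with hπ
  have hcard : ∀ j : ZMod k, (Finset.univ.filter fun i : ZMod n => π i = j).card
      = (Finset.univ.filter fun i : ZMod n => π i = 0).card := by
    intro j
    apply Finset.card_bij (fun i _ => i - (j.val : ZMod n))
    · intro i hi
      simp only [Finset.mem_filter, Finset.mem_univ, true_and] at hi ⊢
      rw [map_sub, hi, map_natCast, ZMod.natCast_rightInverse j, sub_self]
    · intro a _ b _ hab
      exact sub_left_injective hab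
    · intro b hb
      simp only [Finset.mem_filter, Finset.mem_univ, true_and] at hb
      refine ⟨b + (j.val : ZMod n), ?_, by ring⟩
      simp only [Finset.mem_filter, Finset.mem_univ, true_and, map_add, hb,
        map_natCast, ZMod.natCast_rightInverse j, zero_add]
  have hsum : Fintype.card (ZMod n) = ∑ j : ZMod k,
      (Finset.univ.filter fun i : ZMod n => π i = j).card := by
    rw [← Finset.card_univ]
    exact Finset.card_eq_sum_card_fiberwise (fun i _ => Finset.mem_univ (π i))
  have hsum2 : Fintype.card (ZMod n) = Fintype.card (ZMod k) *
      (Finset.univ.filter fun i : ZMod n => π i = 0).card := by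
    rw [hsum]
    rw [Finset.sum_congr rfl (fun j _ => hcard j), Finset.sum_const, ← Finset.card_univ,
      Finset.card_univ, smul_eq_mul]
  rw [ZMod.card, ZMod.card] at hsum2
  have h0 : (Finset.univ.filter fun i : ZMod n => π i = 0).card = n / k :=
    (Nat.div_eq_of_eq_mul_left (Nat.pos_of_ne_zero (NeZero.ne k))
      (hsum2.trans (mul_comm k _))).symm
  rw [hcard j, h0]

lemma numOnes_eq_filter_card [NeZero n] (t : ZMod n → Fin 2) [DecidablePred fun i => t i = 1] :
    numOnes t = (Finset.univ.filter fun i => t i = 1).card := by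
  rw [numOnes, Nat.card_eq_fintype_card, Fintype.card_subtype]

lemma numOnes_expandW [NeZero n] [NeZero k] (h : k ∣ n) (s : ZMod k → Fin 2) :
    numOnes (expandW h s) = (n / k) * numOnes s := by
  classical
  set π := ZMod.castHom h (ZMod k) with hπ
  rw [numOnes_eq_filter_card, numOnes_eq_filter_card]
  have hmaps : ∀ i ∈ Finset.univ.filter fun i : ZMod n => expandW h s i = 1,
      π i ∈ Finset.univ.filter fun j : ZMod k => s j = 1 := by
    intro i hi
    simp only [Finset.mem_filter, Finset.mem_univ, true_and] at hi ⊢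
    exact hi
  rw [Finset.card_eq_sum_card_fiberwise hmaps]
  have hinner : ∀ j ∈ Finset.univ.filter fun j : ZMod k => s j = 1,
      ((Finset.univ.filter fun i : ZMod n => expandW h s i = 1).filter
        fun i => π i = j).card = n / k := by
    intro j hj
    simp only [Finset.mem_filter, Finset.mem_univ, true_and] at hj
    rw [Finset.filter_filter]
    have : ∀ i : ZMod n, (expandW h s i = 1 ∧ π i = j) ↔ π i = j := by
      intro i
      constructor
      · exact fun h' => h'.2
      · intro h'
        refine ⟨?_, h'⟩
        show s (π i) = 1
        rw [h', hj]
    rw [Finset.filter_congr (fun i _ => this i)]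
    exact card_fiber h j
  rw [Finset.sum_congr rfl hinner, Finset.sum_const, smul_eq_mul, mul_comm]

lemma card_numOnes_eq_choose (n i : ℕ) [NeZero n] :
    Nat.card {t : ZMod n → Fin 2 // numOnes t = i} = n.choose i := by
  classical
  have aux : ∀ a : Fin 2, a ≠ 1 → a = 0 := by decide
  have e : {t : ZMod n → Fin 2 // numOnes t = i} ≃ {S : Finset (ZMod n) // S.card = i} :=
    { toFun := fun t => ⟨Finset.univ.filter fun j => t.1 j = 1,
        by rw [← numOnes_eq_filter_card]; exact t.2⟩
      invFun := fun S => ⟨fun j => if j ∈ S.1 then 1 else 0, by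
        have hS : (Finset.univ.filter fun j : ZMod n =>
            (if j ∈ S.1 then (1 : Fin 2) else 0) = 1) = S.1 := by
          ext j
          simp only [Finset.mem_filter, Finset.mem_univ, true_and]
          by_cases hj : j ∈ S.1 <;> simp [hj]
        rw [numOnes_eq_filter_card, hS]
        exact S.2⟩
      left_inv := fun t => by
        apply Subtype.ext
        funext j
        simp only [Finset.mem_filter, Finset.mem_univ, true_and]
        by_cases hj : t.1 j = 1
        · simp [hj]
        · simp [hj, aux _ hj]
      right_inv := fun S => by
        apply Subtype.ext
        ext j
        simp only [Finset.mem_filter, Finset.mem_univ, true_and]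
        by_cases hj : j ∈ S.1 <;> simp [hj] }
  rw [Nat.card_congr e, Nat.card_eq_fintype_card, Fintype.card_finset_len, ZMod.card]

end NecklaceAux

end PartC
section PartD

open Function Finset

namespace NecklaceAux

noncomputable def pw (m j : ℕ) : ℕ :=
  Nat.card {s : ZMod m → Fin 2 // IsPrimitiveWord s ∧ numOnes s = j}

def sigmaSubtypeEquiv {ι : Type*} {β : ι → Type*} (p : ∀ a, β a → Prop) :
    {ω : Σ a, β a // p ω.1 ω.2} ≃ Σ a, {b : β a // p a b} where
  toFun ω := ⟨ω.1.1, ω.1.2, ω.2⟩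
  invFun x := ⟨⟨x.1, x.2.1⟩, x.2.2⟩
  left_inv ω := rfl
  right_inv x := rfl

lemma card_inner (n k i : ℕ) [NeZero n] [NeZero k] (hk : k ∣ n) :
    Nat.card {s : ZMod k → Fin 2 // IsPrimitiveWord s ∧ numOnes (expandW hk s) = i}
      = if (n / k) ∣ i then pw k (i / (n / k)) else 0 := by
  have hq0 : n / k ≠ 0 := by
    intro h0
    apply NeZero.ne n
    rw [← Nat.div_mul_cancel hk, h0, zero_mul]
  by_cases hd : (n / k) ∣ i
  · rw [if_pos hd]
    apply Nat.card_congr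
    apply Equiv.subtypeEquivRight
    intro s
    rw [numOnes_expandW hk s]
    obtain ⟨c, rfl⟩ := hd
    rw [Nat.mul_div_cancel_left c (Nat.pos_of_ne_zero hq0)]
    constructor
    · rintro ⟨h1, h2⟩; exact ⟨h1, Nat.eq_of_mul_eq_mul_left (Nat.pos_of_ne_zero hq0) h2⟩
    · rintro ⟨h1, h2⟩; exact ⟨h1, by rw [h2]⟩
  · rw [if_neg hd]
    haveI : IsEmpty {s : ZMod k → Fin 2 // IsPrimitiveWord s ∧ numOnes (expandW hk s) = i} := by
      constructor
      rintro ⟨s, _, h2⟩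
      exact hd ⟨numOnes s, by rw [← h2, numOnes_expandW]⟩
    exact Nat.card_of_isEmpty

lemma key_count (n i : ℕ) (hn : n ≠ 0) :
    n.choose i = ∑ d ∈ (Nat.gcd n i).divisors, pw (n / d) (i / d) := by
  classical
  haveI : NeZero n := ⟨hn⟩
  let β : ↥n.divisors → Type := fun a => {s : ZMod a.1 → Fin 2 // IsPrimitiveWord s}
  haveI hne : ∀ a : ↥n.divisors, NeZero (a.1 : ℕ) := fun a => ⟨(Nat.pos_of_mem_divisors a.2).ne'⟩
  let Φ : (Σ a : ↥n.divisors, β a) → (ZMod n → Fin 2) :=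
    fun ω => expandW (Nat.dvd_of_mem_divisors ω.1.2) ω.2.1
  have hbij : Function.Bijective Φ := by
    constructor
    · rintro ⟨⟨k₁, h₁⟩, s₁, hs₁⟩ ⟨⟨k₂, h₂⟩, s₂, hs₂⟩ heq
      haveI : NeZero k₁ := hne ⟨k₁, h₁⟩
      haveI : NeZero k₂ := hne ⟨k₂, h₂⟩
      have hk : k₁ = k₂ := by
        rw [← minimalPeriod_expandW (Nat.dvd_of_mem_divisors h₁) hs₁,
          ← minimalPeriod_expandW (Nat.dvd_of_mem_divisors h₂) hs₂]
        exact congrArg _ heq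
      subst hk
      have hss : s₁ = s₂ := expandW_injective (Nat.dvd_of_mem_divisors h₁) heq
      subst hss
      rfl
    · intro t
      obtain ⟨hdvd, s, hs, hfac⟩ := exists_decomp t
      exact ⟨⟨⟨_, Nat.mem_divisors.mpr ⟨hdvd, hn⟩⟩, s, hs⟩, hfac.symm⟩
  have h1 : Nat.card {t : ZMod n → Fin 2 // numOnes t = i}
      = Nat.card {ω : Σ a : ↥n.divisors, β a // numOnes (Φ ω) = i} :=
    (Nat.card_congr (Equiv.subtypeEquiv (Equiv.ofBijective Φ hbij) (fun ω => Iff.rfl))).symm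
  have h2 : Nat.card {ω : Σ a : ↥n.divisors, β a // numOnes (Φ ω) = i}
      = Nat.card (Σ a : ↥n.divisors, {b : β a // numOnes (Φ ⟨a, b⟩) = i}) :=
    Nat.card_congr (sigmaSubtypeEquiv (β := β) (fun a b => numOnes (Φ ⟨a, b⟩) = i))
  haveI hfin : ∀ a : ↥n.divisors, Fintype {b : β a // numOnes (Φ ⟨a, b⟩) = i} := fun a => by
    haveI := hne a
    exact Fintype.ofFinite _
  have h3 : Nat.card (Σ a : ↥n.divisors, {b : β a // numOnes (Φ ⟨a, b⟩) = i})
      = ∑ a : ↥n.divisors, Nat.card {b : β a // numOnes (Φ ⟨a, b⟩) = i} := by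
    rw [Nat.card_eq_fintype_card, Fintype.card_sigma]
    exact Finset.sum_congr rfl fun a _ => Nat.card_eq_fintype_card.symm
  have h4 : ∀ a : ↥n.divisors, Nat.card {b : β a // numOnes (Φ ⟨a, b⟩) = i}
      = if (n / a.1) ∣ i then pw a.1 (i / (n / a.1)) else 0 := by
    intro a
    haveI := hne a
    have e : {b : β a // numOnes (Φ ⟨a, b⟩) = i} ≃
        {s : ZMod a.1 → Fin 2 // IsPrimitiveWord s ∧
          numOnes (expandW (Nat.dvd_of_mem_divisors a.2) s) = i} :=
      Equiv.subtypeSubtypeEquivSubtypeInter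
        (fun s : ZMod a.1 → Fin 2 => IsPrimitiveWord s)
        (fun s => numOnes (expandW (Nat.dvd_of_mem_divisors a.2) s) = i)
    rw [Nat.card_congr e, card_inner n a.1 i (Nat.dvd_of_mem_divisors a.2)]
  have h5 : ∑ a : ↥n.divisors, (if (n / a.1) ∣ i then pw a.1 (i / (n / a.1)) else 0)
      = ∑ d ∈ n.divisors, (if (n / d) ∣ i then pw d (i / (n / d)) else 0) :=
    Finset.sum_coe_sort n.divisors (fun d => if n / d ∣ i then pw d (i / (n / d)) else 0)
  have h6 : ∑ d ∈ n.divisors, (if (n / d) ∣ i then pw d (i / (n / d)) else 0)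
      = ∑ d ∈ n.divisors, (if d ∣ i then pw (n / d) (i / d) else 0) := by
    rw [← Nat.sum_div_divisors n (fun d => if (n / d) ∣ i then pw d (i / (n / d)) else 0)]
    apply Finset.sum_congr rfl
    intro d hd
    rw [Nat.div_div_self (Nat.dvd_of_mem_divisors hd) hn]
  have h7 : ∑ d ∈ n.divisors, (if d ∣ i then pw (n / d) (i / d) else 0)
      = ∑ d ∈ (Nat.gcd n i).divisors, pw (n / d) (i / d) := by
    rw [← Finset.sum_filter]
    have hset : n.divisors.filter (fun d => d ∣ i) = (Nat.gcd n i).divisors := by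
      ext d
      simp only [Finset.mem_filter, Nat.mem_divisors, Nat.dvd_gcd_iff]
      constructor
      · rintro ⟨⟨h1, -⟩, h2⟩
        exact ⟨⟨h1, h2⟩, fun h0 => hn (Nat.eq_zero_of_gcd_eq_zero_left h0)⟩
      · rintro ⟨⟨h1, h2⟩, -⟩
        exact ⟨⟨h1, hn⟩, h2⟩
    rw [hset]
  rw [← card_numOnes_eq_choose n i, h1, h2, h3, Finset.sum_congr rfl (fun a _ => h4 a), h5, h6, h7]

end NecklaceAux

end PartD

open NecklaceAux

/-- `L_2(n,i) = (1/n) · Σ_{d | gcd(n,i)} μ(d) C(n/d, i/d)`. -/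
theorem stmt_1 (n i : ℕ) (hn : 1 ≤ n) (hi : i ≤ n) :
    (L2 n i : ℚ) =
      (1 / n) * ∑ d ∈ (Nat.gcd n i).divisors,
        (ArithmeticFunction.moebius d : ℚ) * ((n / d).choose (i / d) : ℚ) := by
  classical
  haveI : NeZero n := ⟨by omega⟩
  have hn0 : n ≠ 0 := by omega
  set g := Nat.gcd n i with hg
  have hg0 : g ≠ 0 := fun h => hn0 (Nat.eq_zero_of_gcd_eq_zero_left h)
  set n' := n / g with hn'
  set i' := i / g with hi'
  have hgn : g * n' = n := Nat.mul_div_cancel' (Nat.gcd_dvd_left n i)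
  have hgi : g * i' = i := Nat.mul_div_cancel' (Nat.gcd_dvd_right n i)
  have hn'0 : n' ≠ 0 := by intro h; rw [h, mul_zero] at hgn; exact hn0 hgn.symm
  have hco : Nat.gcd n' i' = 1 := Nat.coprime_div_gcd_div_gcd (Nat.pos_of_ne_zero hg0)
  have hmain : ∀ m > 0, ∑ d ∈ m.divisors, (fun m => (pw (m * n') (m * i') : ℤ)) d
      = (fun m => ((m * n').choose (m * i') : ℤ)) m := by
    intro m hm
    have hkey := key_count (m * n') (m * i') (Nat.mul_ne_zero hm.ne' hn'0)
    have hgcd : Nat.gcd (m * n') (m * i') = m := by rw [Nat.gcd_mul_left, hco, mul_one]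
    rw [hgcd] at hkey
    have hre : ∀ d ∈ m.divisors, pw (m * n' / d) (m * i' / d) = pw (m / d * n') (m / d * i') := by
      intro d hd
      have hdm := Nat.dvd_of_mem_divisors hd
      have e1 : m * n' / d = m / d * n' := by
        rw [mul_comm m n', Nat.mul_div_assoc n' hdm, mul_comm]
      have e2 : m * i' / d = m / d * i' := by
        rw [mul_comm m i', Nat.mul_div_assoc i' hdm, mul_comm]
      rw [e1, e2]
    rw [Finset.sum_congr rfl hre] at hkey
    simp only
    rw [hkey]
    push_cast
    exact (Nat.sum_div_divisors m (fun d => (pw (d * n') (d * i') : ℤ))).symm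
  have hinv := (ArithmeticFunction.sum_eq_iff_sum_smul_moebius_eq
      (f := fun m => (pw (m * n') (m * i') : ℤ))
      (g := fun m => ((m * n').choose (m * i') : ℤ))).mp hmain g (Nat.pos_of_ne_zero hg0)
  rw [Nat.sum_divisorsAntidiagonal
      (fun a b => (ArithmeticFunction.moebius a) • (((b * n').choose (b * i') : ℤ)))] at hinv
  rw [hgn, hgi] at hinv
  have hsummand : ∀ d ∈ g.divisors,
      (ArithmeticFunction.moebius d) • (((g / d * n').choose (g / d * i') : ℤ))
      = (ArithmeticFunction.moebius d) * ((n / d).choose (i / d) : ℤ) := by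
    intro d hd
    have hdg := Nat.dvd_of_mem_divisors hd
    have e1 : g / d * n' = n / d := by
      rw [← hgn, mul_comm g n', Nat.mul_div_assoc n' hdg, mul_comm]
    have e2 : g / d * i' = i / d := by
      rw [← hgi, mul_comm g i', Nat.mul_div_assoc i' hdg, mul_comm]
    rw [e1, e2, smul_eq_mul]
  rw [Finset.sum_congr rfl hsummand] at hinv
  have hL : pw n i = L2 n i * n := card_prim_words n i
  have hq : ((L2 n i : ℚ)) * n
      = ∑ d ∈ g.divisors, (ArithmeticFunction.moebius d : ℚ) * ((n / d).choose (i / d) : ℚ) := by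
    have hcast := congrArg (fun z : ℤ => (z : ℚ)) hinv
    push_cast at hcast
    rw [hL] at hcast
    push_cast at hcast
    rw [← hcast]
  have hnq : (n : ℚ) ≠ 0 := Nat.cast_ne_zero.mpr hn0
  rw [← hq]
  field_simp
end

section
/- Let m ≥ 2 be odd, and let a(m) denote the number of primitive ternary words of length m in which the letter 1 occurs an odd number of times. Then a(m) = (1/2) · Σ_{d | m} μ(d) · 3^(m/d). -/
noncomputable def numOnes3 {n : ℕ} (s : ZMod n → Fin 3) : ℕ := Nat.card {i : ZMod n // s i = 1}

open Finset in
lemma numOnes3_eq_card {n : ℕ} [NeZero n] (s : ZMod n → Fin 3) :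
    numOnes3 s = (univ.filter (fun i => s i = 1)).card := by
  classical
  rw [numOnes3, Nat.card_eq_fintype_card, Fintype.card_subtype]

/-- stabilizer subgroup of a word under rotation -/
def stmt4_stab {n : ℕ} (t : ZMod n → Fin 3) : AddSubgroup (ZMod n) where
  carrier := {r | ∀ i, t (i + r) = t i}
  zero_mem' := by intro i; simp
  add_mem' := by
    intro a b ha hb i
    rw [← add_assoc, hb, ha]
  neg_mem' := by
    intro a ha i
    conv_rhs => rw [show i = (i + -a) + a by ring]
    rw [ha]

lemma stmt4_stab_mul {n : ℕ} [NeZero n] {t : ZMod n → Fin 3} {r : ZMod n} (hr : r ∈ stmt4_stab t)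
    (z : ZMod n) : z * r ∈ stmt4_stab t := by
  have h1 : z.val • r ∈ stmt4_stab t := AddSubgroup.nsmul_mem _ hr _
  rwa [nsmul_eq_mul, ZMod.natCast_val, ZMod.cast_id] at h1

lemma stmt4_primitive_iff {n : ℕ} (s : ZMod n → Fin 3) :
    IsPrimitiveWord s ↔ ∀ r ∈ stmt4_stab s, r = 0 := by
  constructor
  · intro h r hr
    by_contra h0
    exact h r h0 (funext hr)
  · intro h r hr0 heq
    exact hr0 (h r (fun i => congrFun heq i))

open Classical in
noncomputable def stmt4_D {n : ℕ} [NeZero n] (t : ZMod n → Fin 3) : ℕ :=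
  Nat.find (⟨n, Nat.pos_of_ne_zero (NeZero.ne n), by
    rw [ZMod.natCast_self]; exact (stmt4_stab t).zero_mem⟩ :
    ∃ c, 0 < c ∧ ((c : ℕ) : ZMod n) ∈ stmt4_stab t)

open Classical in
lemma stmt4_D_spec {n : ℕ} [NeZero n] (t : ZMod n → Fin 3) :
    0 < stmt4_D t ∧ ((stmt4_D t : ℕ) : ZMod n) ∈ stmt4_stab t :=
  Nat.find_spec (⟨n, Nat.pos_of_ne_zero (NeZero.ne n), by
    rw [ZMod.natCast_self]; exact (stmt4_stab t).zero_mem⟩ :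
    ∃ c, 0 < c ∧ ((c : ℕ) : ZMod n) ∈ stmt4_stab t)

lemma stmt4_D_pos {n : ℕ} [NeZero n] (t : ZMod n → Fin 3) : 0 < stmt4_D t :=
  (stmt4_D_spec t).1

lemma stmt4_D_mem {n : ℕ} [NeZero n] (t : ZMod n → Fin 3) :
    ((stmt4_D t : ℕ) : ZMod n) ∈ stmt4_stab t :=
  (stmt4_D_spec t).2

lemma stmt4_D_min {n : ℕ} [NeZero n] (t : ZMod n → Fin 3) {c : ℕ} (hc : 0 < c)
    (hmem : ((c : ℕ) : ZMod n) ∈ stmt4_stab t) : stmt4_D t ≤ c := by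
  classical
  exact Nat.find_min' _ ⟨hc, hmem⟩

lemma stmt4_D_dvd {n : ℕ} [NeZero n] (t : ZMod n → Fin 3) : stmt4_D t ∣ n := by
  set d := stmt4_D t with hd
  set g := Nat.gcd d n with hg
  have hd0 : 0 < d := stmt4_D_pos t
  have hg0 : 0 < g := Nat.gcd_pos_of_pos_left n hd0
  have hgle : g ≤ d := Nat.le_of_dvd hd0 (Nat.gcd_dvd_left d n)
  have hgmem : ((g : ℕ) : ZMod n) ∈ stmt4_stab t := by
    have hb := Nat.gcd_eq_gcd_ab d n
    have : ((g : ℕ) : ZMod n) = ((Nat.gcdA d n : ℤ) : ZMod n) * ((d : ℕ) : ZMod n) := by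
      have := congrArg (fun z : ℤ => ((z : ℤ) : ZMod n)) hb
      push_cast at this ⊢
      rw [this]
      simp [ZMod.natCast_self]
      ring
    rw [this]
    exact stmt4_stab_mul (stmt4_D_mem t) _
  have : d ≤ g := stmt4_D_min t hg0 hgmem
  have : g = d := le_antisymm hgle this
  rw [← this]
  exact Nat.gcd_dvd_right d n

def stmt4_infl {n d : ℕ} (h : d ∣ n) (s : ZMod d → Fin 3) : ZMod n → Fin 3 :=
  fun i => s (ZMod.castHom h (ZMod d) i)

lemma stmt4_castHom_surj {n d : ℕ} [NeZero n] [NeZero d] (h : d ∣ n) :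
    Function.Surjective (ZMod.castHom h (ZMod d)) := by
  intro j
  refine ⟨(j.val : ZMod n), ?_⟩
  rw [map_natCast, ZMod.natCast_zmod_val]

lemma stmt4_stab_infl {n d : ℕ} [NeZero n] [NeZero d] (h : d ∣ n) (s : ZMod d → Fin 3)
    (r : ZMod n) : r ∈ stmt4_stab (stmt4_infl h s) ↔ ZMod.castHom h (ZMod d) r ∈ stmt4_stab s := by
  constructor
  · intro hr j
    obtain ⟨i, rfl⟩ := stmt4_castHom_surj h j
    have := hr i
    simpa [stmt4_infl, map_add] using this
  · intro hr i
    have := hr (ZMod.castHom h (ZMod d) i)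
    simpa [stmt4_infl, map_add] using this

lemma stmt4_infl_inj {n d : ℕ} [NeZero n] [NeZero d] (h : d ∣ n) :
    Function.Injective (stmt4_infl (n := n) h) := by
  intro s1 s2 hs
  funext j
  obtain ⟨i, rfl⟩ := stmt4_castHom_surj h j
  exact congrFun hs i

noncomputable def stmt4_desc {n d : ℕ} (t : ZMod n → Fin 3) : ZMod d → Fin 3 :=
  fun j => t ((j.val : ℕ) : ZMod n)

lemma stmt4_infl_desc {n d : ℕ} [NeZero n] [NeZero d] (h : d ∣ n) (t : ZMod n → Fin 3)
    (hmem : ((d : ℕ) : ZMod n) ∈ stmt4_stab t) :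
    stmt4_infl h (stmt4_desc (d := d) t) = t := by
  funext i
  have hv : (ZMod.castHom h (ZMod d) i).val = i.val % d := by
    rw [ZMod.castHom_apply, ← ZMod.natCast_val, ZMod.val_natCast]
  rw [stmt4_infl, stmt4_desc, hv]
  conv_rhs => rw [← ZMod.natCast_zmod_val i, ← Nat.mod_add_div i.val d]
  push_cast
  have : ((d : ℕ) : ZMod n) * ((i.val / d : ℕ) : ZMod n) ∈ stmt4_stab t := by
    rw [mul_comm]; exact stmt4_stab_mul hmem _
  exact (this _).symm

lemma stmt4_ker_card {n d : ℕ} [NeZero n] [NeZero d] (h : d ∣ n) :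
    Nat.card ((ZMod.castHom h (ZMod d)).toAddMonoidHom.ker) = n / d := by
  set f := (ZMod.castHom h (ZMod d)).toAddMonoidHom with hf
  have hsurj : Function.Surjective f := stmt4_castHom_surj h
  have e : (ZMod n ⧸ f.ker) ≃+ ZMod d := QuotientAddGroup.quotientKerEquivOfSurjective f hsurj
  have hq : Nat.card (ZMod n ⧸ f.ker) = d := by
    rw [Nat.card_congr e.toEquiv, Nat.card_zmod]
  have := AddSubgroup.card_eq_card_quotient_mul_card_addSubgroup (f.ker)
  rw [Nat.card_zmod, hq] at this
  obtain ⟨e', rfl⟩ := h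
  have hd : 0 < d := Nat.pos_of_ne_zero (NeZero.ne d)
  rw [Nat.mul_div_cancel_left _ hd]
  exact Nat.eq_of_mul_eq_mul_left hd this.symm

open Finset in
lemma stmt4_fiber_card {n d : ℕ} [NeZero n] [NeZero d] (h : d ∣ n) (j : ZMod d) :
    Nat.card {i : ZMod n // ZMod.castHom h (ZMod d) i = j} = n / d := by
  obtain ⟨i0, hi0⟩ := stmt4_castHom_surj h j
  set f := (ZMod.castHom h (ZMod d)).toAddMonoidHom with hf
  have e : {i : ZMod n // ZMod.castHom h (ZMod d) i = j} ≃ f.ker :=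
    { toFun := fun i => ⟨i.1 - i0, by
        have : f (i.1 - i0) = 0 := by
          simp only [hf, map_sub]
          simp only [RingHom.toAddMonoidHom_eq_coe, AddMonoidHom.coe_coe]
          rw [i.2, hi0, sub_self]
        exact this⟩
      invFun := fun i => ⟨i.1 + i0, by
        have h1 : f i.1 = 0 := i.2
        have : f (i.1 + i0) = j := by
          rw [map_add, h1, zero_add]
          exact hi0
        exact this⟩
      left_inv := fun i => Subtype.ext (by simp)
      right_inv := fun i => by simp }
  rw [Nat.card_congr e, stmt4_ker_card h]

open Finset in
lemma stmt4_numOnes_infl {n d : ℕ} [NeZero n] [NeZero d] (h : d ∣ n) (s : ZMod d → Fin 3) :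
    numOnes3 (stmt4_infl h s) = (n / d) * numOnes3 s := by
  classical
  rw [numOnes3_eq_card, numOnes3_eq_card]
  rw [Finset.card_eq_sum_card_fiberwise (f := fun i => ZMod.castHom h (ZMod d) i)
    (t := univ.filter fun j => s j = 1) (fun i hi => by
      simp only [mem_coe, mem_filter, mem_univ, true_and] at hi ⊢
      exact hi)]
  rw [Finset.sum_congr rfl (fun j hj => ?_), Finset.sum_const, smul_eq_mul, mul_comm]
  simp only [mem_filter, mem_univ, true_and] at hj
  have : (univ.filter fun i : ZMod n => stmt4_infl h s i = 1).filter
      (fun i => ZMod.castHom h (ZMod d) i = j)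
      = univ.filter (fun i => ZMod.castHom h (ZMod d) i = j) := by
    ext i
    simp only [mem_filter, mem_univ, true_and, stmt4_infl]
    constructor
    · exact fun hi => hi.2
    · intro hi
      exact ⟨by convert (Finset.mem_filter (s := univ) (p := fun i => s (ZMod.castHom h (ZMod d) i) = 1)).2 ⟨mem_univ i, by rw [hi]; exact hj⟩; rfl, hi⟩
  rw [this]
  have := stmt4_fiber_card h j
  rw [Nat.card_eq_fintype_card, Fintype.card_subtype] at this
  exact this

lemma stmt4_D_infl {n d : ℕ} [NeZero n] [NeZero d] (h : d ∣ n) (s : ZMod d → Fin 3)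
    (hs : IsPrimitiveWord s) : stmt4_D (stmt4_infl h s) = d := by
  have hd0 : 0 < d := Nat.pos_of_ne_zero (NeZero.ne d)
  have hmem : ((d : ℕ) : ZMod n) ∈ stmt4_stab (stmt4_infl h s) := by
    rw [stmt4_stab_infl, map_natCast, ZMod.natCast_self]
    exact (stmt4_stab s).zero_mem
  have hle : stmt4_D (stmt4_infl h s) ≤ d := stmt4_D_min _ hd0 hmem
  have hcmem := stmt4_D_mem (stmt4_infl h s)
  rw [stmt4_stab_infl, map_natCast] at hcmem
  have h0 : ((stmt4_D (stmt4_infl h s) : ℕ) : ZMod d) = 0 :=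
    (stmt4_primitive_iff s).1 hs _ hcmem
  have hdvd : d ∣ stmt4_D (stmt4_infl h s) := (ZMod.natCast_eq_zero_iff _ _).1 h0
  exact le_antisymm hle (Nat.le_of_dvd (stmt4_D_pos _) hdvd)

lemma stmt4_desc_spec {n d : ℕ} [NeZero n] [NeZero d] (h : d ∣ n) (t : ZMod n → Fin 3)
    (hD : stmt4_D t = d) :
    IsPrimitiveWord (stmt4_desc (d := d) t) ∧ stmt4_infl h (stmt4_desc (d := d) t) = t := by
  have hmem : ((d : ℕ) : ZMod n) ∈ stmt4_stab t := hD ▸ stmt4_D_mem t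
  have hinfl := stmt4_infl_desc h t hmem
  refine ⟨?_, hinfl⟩
  rw [stmt4_primitive_iff]
  intro r hr
  by_contra hr0
  have hval0 : 0 < r.val := by
    rcases Nat.eq_zero_or_pos r.val with h0 | h0
    · exact absurd ((ZMod.val_eq_zero r).1 h0) hr0
    · exact h0
  have hvlt : r.val < d := ZMod.val_lt r
  have hstab : ((r.val : ℕ) : ZMod n) ∈ stmt4_stab t := by
    rw [← hinfl, stmt4_stab_infl, map_natCast, ZMod.natCast_zmod_val]
    exact hr
  have := stmt4_D_min t hval0 hstab
  omega

lemma stmt4_odd_quot {n d : ℕ} (hodd : Odd n) (h : d ∣ n) : Odd (n / d) := by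
  have hn : n ≠ 0 := by rintro rfl; simp [Nat.odd_iff] at hodd
  have : n = d * (n / d) := (Nat.mul_div_cancel' h).symm
  rw [this, Nat.odd_mul] at hodd
  exact hodd.2

open Finset in
lemma stmt4_lemmaA (n : ℕ) [NeZero n] (hodd : Odd n) :
    Nat.card {t : ZMod n → Fin 3 // Odd (numOnes3 t)} =
      ∑ d ∈ n.divisors,
        Nat.card {s : ZMod d → Fin 3 // IsPrimitiveWord s ∧ Odd (numOnes3 s)} := by
  classical
  rw [Nat.card_eq_fintype_card, Fintype.card_subtype]
  rw [Finset.card_eq_sum_card_fiberwise (f := fun t => stmt4_D t)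
    (t := n.divisors) (fun t _ => Nat.mem_divisors.2 ⟨stmt4_D_dvd t, NeZero.ne n⟩)]
  refine Finset.sum_congr rfl fun d hd => ?_
  obtain ⟨hdvd, hn0⟩ := Nat.mem_divisors.1 hd
  have hd0 : d ≠ 0 := by rintro rfl; exact hn0 (Nat.eq_zero_of_zero_dvd hdvd)
  haveI : NeZero d := ⟨hd0⟩
  have hq : Odd (n / d) := stmt4_odd_quot hodd hdvd
  rw [Nat.card_eq_fintype_card, Fintype.card_subtype]
  refine Finset.card_bij' (fun t _ => stmt4_desc (d := d) t)
    (fun s _ => stmt4_infl hdvd s) ?_ ?_ ?_ ?_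
  · intro t ht
    simp only [mem_filter, mem_univ, true_and] at ht ⊢
    obtain ⟨hto, htD⟩ := ht
    obtain ⟨hprim, hinfl⟩ := stmt4_desc_spec hdvd t htD
    refine ⟨hprim, ?_⟩
    have := stmt4_numOnes_infl hdvd (stmt4_desc (d := d) t)
    rw [hinfl] at this
    rw [this, Nat.odd_mul] at hto
    exact hto.2
  · intro s hs
    simp only [mem_filter, mem_univ, true_and] at hs ⊢
    obtain ⟨hprim, hso⟩ := hs
    constructor
    · rw [stmt4_numOnes_infl hdvd s, Nat.odd_mul]
      exact ⟨hq, hso⟩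
    · exact stmt4_D_infl hdvd s hprim
  · intro t ht
    simp only [mem_filter, mem_univ, true_and] at ht
    exact (stmt4_desc_spec hdvd t ht.2).2
  · intro s hs
    simp only [mem_filter, mem_univ, true_and] at hs
    apply stmt4_infl_inj hdvd
    exact (stmt4_desc_spec hdvd (stmt4_infl hdvd s) (stmt4_D_infl hdvd s hs.1)).2

open Finset in
lemma stmt4_sign_sum (n : ℕ) [NeZero n] :
    ∑ t : ZMod n → Fin 3, (-1 : ℤ) ^ (numOnes3 t) = 1 := by
  classical
  have key : ∀ t : ZMod n → Fin 3, (-1 : ℤ) ^ (numOnes3 t)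
      = ∏ i : ZMod n, (if t i = 1 then (-1 : ℤ) else 1) := by
    intro t
    rw [numOnes3_eq_card, Finset.prod_ite, Finset.prod_const, Finset.prod_const, one_pow,
      mul_one]
  simp_rw [key]
  have h2 := Finset.prod_univ_sum (fun _ : ZMod n => (univ : Finset (Fin 3)))
    (fun _ v => if v = 1 then (-1 : ℤ) else 1)
  rw [Fintype.piFinset_univ] at h2
  rw [← h2]
  rw [show (∑ v : Fin 3, (if v = 1 then (-1:ℤ) else 1)) = 1 by decide]
  simp

open Finset in
lemma stmt4_card_odd (n : ℕ) [NeZero n] :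
    ((Nat.card {t : ZMod n → Fin 3 // Odd (numOnes3 t)} : ℚ)) = ((3:ℚ) ^ n - 1) / 2 := by
  classical
  have hA : Nat.card {t : ZMod n → Fin 3 // Odd (numOnes3 t)}
      = (univ.filter (fun t : ZMod n → Fin 3 => Odd (numOnes3 t))).card := by
    rw [Nat.card_eq_fintype_card, Fintype.card_subtype]
  set A := (univ.filter (fun t : ZMod n → Fin 3 => Odd (numOnes3 t))) with hAdef
  set B := (univ.filter (fun t : ZMod n → Fin 3 => ¬ Odd (numOnes3 t))) with hBdef
  have hsplit : (A.card : ℤ) + B.card = 3 ^ n := by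
    have h := Finset.card_filter_add_card_filter_not
      (s := (univ : Finset (ZMod n → Fin 3))) (p := fun t => Odd (numOnes3 t))
    have hcard : (univ : Finset (ZMod n → Fin 3)).card = 3 ^ n := by
      simp [ZMod.card]
    rw [hcard] at h
    exact_mod_cast h
  have hdiff : (B.card : ℤ) - A.card = 1 := by
    have h := stmt4_sign_sum n
    rw [← Finset.sum_filter_add_sum_filter_not univ (fun t => Odd (numOnes3 t))] at h
    have h1 : ∑ t ∈ A, (-1 : ℤ) ^ numOnes3 t = -A.card := by
      have e : ∀ t ∈ A, (-1:ℤ) ^ numOnes3 t = -1 :=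
        fun t ht => Odd.neg_one_pow (by simpa [hAdef] using ht)
      rw [Finset.sum_congr rfl e, Finset.sum_const]; simp
    have h2 : ∑ t ∈ B, (-1 : ℤ) ^ numOnes3 t = B.card := by
      have e : ∀ t ∈ B, (-1:ℤ) ^ numOnes3 t = 1 :=
        fun t ht => Even.neg_one_pow (Nat.not_odd_iff_even.1 (by simpa [hBdef] using ht))
      rw [Finset.sum_congr rfl e, Finset.sum_const]; simp
    rw [h1, h2] at h
    linarith
  rw [hA]
  have h1 : ((A.card : ℚ)) + B.card = 3^n := by exact_mod_cast hsplit
  have h2 : ((B.card : ℚ)) - A.card = 1 := by exact_mod_cast hdiff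
  linarith

/-- the number `a(m)` of primitive ternary words of length `m` with an odd
number of ones equals `(1/2) · Σ_{d | m} μ(d) 3^(m/d)`, for odd `m ≥ 2`. -/
theorem stmt_4 (m : ℕ) (hm : 2 ≤ m) (hodd : Odd m) :
    (Nat.card {s : ZMod m → Fin 3 // IsPrimitiveWord s ∧ Odd (numOnes3 s)} : ℚ) =
      (1 / 2) * ∑ d ∈ m.divisors,
        (ArithmeticFunction.moebius d : ℚ) * (3 : ℚ) ^ (m / d) := by
  classical
  set f : ℕ → ℚ :=
    fun d => (Nat.card {s : ZMod d → Fin 3 // IsPrimitiveWord s ∧ Odd (numOnes3 s)} : ℚ) with hf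
  set g : ℕ → ℚ := fun n => ((3:ℚ) ^ n - 1) / 2 with hg
  have hclosed : ∀ a b : ℕ, a ∣ b → b ∈ {k : ℕ | Odd k} → a ∈ {k : ℕ | Odd k} := by
    intro a b hab hb
    obtain ⟨c, rfl⟩ := hab
    simp only [Set.mem_setOf_eq, Nat.odd_mul] at hb ⊢
    exact hb.1
  have hkey : ∀ n > 0, n ∈ {k : ℕ | Odd k} → ∑ i ∈ n.divisors, f i = g n := by
    intro n hn hodd'
    haveI : NeZero n := ⟨hn.ne'⟩
    have hA := stmt4_lemmaA n hodd'
    have hB := stmt4_card_odd n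
    simp only [hf, hg]
    rw [← hB, hA]
    push_cast
    rfl
  have hinv := (ArithmeticFunction.sum_eq_iff_sum_mul_moebius_eq_on
    {k : ℕ | Odd k} hclosed).1 hkey m (by omega) hodd
  have hanti : ∑ x ∈ m.divisorsAntidiagonal,
      (ArithmeticFunction.moebius x.fst : ℚ) * g x.snd
      = ∑ d ∈ m.divisors, (ArithmeticFunction.moebius d : ℚ) * g (m / d) :=
    Nat.sum_divisorsAntidiagonal (fun a b => (ArithmeticFunction.moebius a : ℚ) * g b)
  rw [hanti] at hinv
  have hmu : ∑ d ∈ m.divisors, ((ArithmeticFunction.moebius d : ℤ) : ℚ) = 0 := by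
    have h2 := ArithmeticFunction.coe_mul_zeta_apply
      (f := ArithmeticFunction.moebius) (x := m)
    rw [ArithmeticFunction.moebius_mul_coe_zeta] at h2
    have h3 : (∑ d ∈ m.divisors, ArithmeticFunction.moebius d) = 0 := by
      rw [← h2, ArithmeticFunction.one_apply_ne (by omega : m ≠ 1)]
    exact_mod_cast congrArg (fun z : ℤ => (z : ℚ)) h3
  have hfm : f m = (1 / 2) * ∑ d ∈ m.divisors,
      (ArithmeticFunction.moebius d : ℚ) * (3 : ℚ) ^ (m / d) := by
    rw [← hinv]
    have : ∀ d ∈ m.divisors, (ArithmeticFunction.moebius d : ℚ) * g (m / d)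
        = (1/2) * ((ArithmeticFunction.moebius d : ℚ) * (3:ℚ) ^ (m / d))
          - (1/2) * ((ArithmeticFunction.moebius d : ℤ) : ℚ) := by
      intro d _
      rw [hg]
      push_cast
      ring
    rw [Finset.sum_congr rfl this, Finset.sum_sub_distrib, ← Finset.mul_sum, ← Finset.mul_sum,
      hmu]
    ring
  exact hfm
end

section
/- Let m ≥ 3 be odd. Then the number of primitive ternary necklaces of length m in which the letter 1 occurs an odd number of times equals exactly half the total number of primitive ternary necklaces of length m; i.e., L_3(m; odd 1-count) = L_3(m)/2. -/
open Finset


section Words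
variable {n : ℕ}

abbrev Wd (n : ℕ) := ZMod n → Fin 3

def per (e : ℕ) (s : Wd n) : Prop := ∀ i, s (i + (e : ZMod n)) = s i

def PZ (s : Wd n) : AddSubgroup ℤ where
  carrier := {r : ℤ | ∀ i, s (i + (r : ZMod n)) = s i}
  zero_mem' := by intro i; simp
  add_mem' := by
    intro a b ha hb i
    push_cast
    rw [← add_assoc, hb, ha]
  neg_mem' := by
    intro a ha i
    have := ha (i + ((-a : ℤ) : ZMod n))
    push_cast at this ⊢
    simpa using this.symm

noncomputable def minp (s : Wd n) : ℕ :=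
  (Classical.choose (Int.subgroup_cyclic (PZ s))).natAbs

lemma minp_dvd_iff {s : Wd n} {e : ℕ} : minp s ∣ e ↔ per e s := by
  have hspec := Classical.choose_spec (Int.subgroup_cyclic (PZ s))
  set g := Classical.choose (Int.subgroup_cyclic (PZ s)) with hg
  have hmem : ∀ x : ℤ, x ∈ PZ s ↔ g ∣ x := by
    intro x
    rw [hspec, AddSubgroup.mem_closure_singleton]
    constructor
    · rintro ⟨k, rfl⟩; exact ⟨k, by rw [zsmul_eq_mul, Int.cast_id]; ring⟩
    · rintro ⟨k, rfl⟩; exact ⟨k, by rw [zsmul_eq_mul, Int.cast_id]; ring⟩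
  have : per e s ↔ (e : ℤ) ∈ PZ s := by
    constructor
    · intro h i; rw [Int.cast_natCast]; exact h i
    · intro h i; have := h i; rwa [Int.cast_natCast] at this
  rw [this, hmem, minp]
  rw [Int.natAbs_dvd_natAbs.symm]
  simp
  exact Iff.rfl

lemma per_minp (s : Wd n) : per (minp s) s := minp_dvd_iff.mp dvd_rfl

lemma per_n (s : Wd n) : per n s := by intro i; simp

lemma minp_dvd_n (s : Wd n) : minp s ∣ n := minp_dvd_iff.mpr (per_n s)

lemma prim_iff_minp (hn : n ≠ 0) {s : Wd n} : IsPrimitiveWord s ↔ minp s = n := by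
  haveI : NeZero n := ⟨hn⟩
  constructor
  · intro hp
    by_contra hne
    have hlt : minp s < n := lt_of_le_of_ne (Nat.le_of_dvd (Nat.pos_of_ne_zero hn) (minp_dvd_n s)) hne
    have hpos : minp s ≠ 0 := by
      intro h0
      have := minp_dvd_n s
      rw [h0] at this
      exact hn (Nat.eq_zero_of_zero_dvd this)
    refine hp ((minp s : ZMod n)) ?_ ?_
    · rw [Ne, ZMod.natCast_eq_zero_iff]
      intro hdvd
      exact absurd (Nat.le_of_dvd (Nat.pos_of_ne_zero hpos) hdvd) (not_le_of_gt hlt)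
    · funext i; exact per_minp s i
  · intro hm r hr habs
    have hper : per r.val s := by
      intro i
      have : ((r.val : ℕ) : ZMod n) = r := ZMod.natCast_rightInverse r
      rw [this]
      exact congrFun habs i
    have := minp_dvd_iff.mpr hper
    rw [hm] at this
    have hlt := ZMod.val_lt r
    have hv0 : r.val = 0 := Nat.eq_zero_of_dvd_of_lt this hlt
    exact hr (by rw [← ZMod.natCast_rightInverse r, hv0]; simp)

section Phi
variable {e : ℕ} (h : e ∣ n)

noncomputable def Phi (h : e ∣ n) (u : Wd e) : Wd n :=
  fun i => u (ZMod.castHom h (ZMod e) i)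

lemma castHom_natCast (c : ℕ) : ZMod.castHom h (ZMod e) (c : ZMod n) = (c : ZMod e) :=
  map_natCast _ c

lemma castHom_val_section (hn : n ≠ 0) (j : ZMod e) :
    ZMod.castHom h (ZMod e) ((j.val : ℕ) : ZMod n) = j := by
  haveI : NeZero n := ⟨hn⟩
  haveI : NeZero e := ⟨fun h0 => hn (by simpa [h0] using h)⟩
  rw [castHom_natCast]
  exact ZMod.natCast_rightInverse j

lemma per_phi_iff (hn : n ≠ 0) (u : Wd e) (c : ℕ) : per c (Phi h u) ↔ per c u := by
  constructor
  · intro hp j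
    haveI : NeZero e := ⟨fun h0 => hn (by simpa [h0] using h)⟩
    have := hp ((j.val : ℕ) : ZMod n)
    simp only [Phi, map_add, castHom_natCast h, ZMod.natCast_zmod_val] at this
    exact this
  · intro hp i
    show u (ZMod.castHom h (ZMod e) (i + (c : ZMod n))) = _
    rw [map_add, castHom_natCast]
    exact hp _

lemma minp_phi (hn : n ≠ 0) (u : Wd e) : minp (Phi h u) = minp u := by
  apply Nat.dvd_antisymm
  · exact minp_dvd_iff.mpr ((per_phi_iff h hn u _).mpr (per_minp u))
  · exact minp_dvd_iff.mpr ((per_phi_iff h hn u _).mp (per_minp (Phi h u)))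

lemma phi_injective (hn : n ≠ 0) : Function.Injective (Phi (n := n) h) := by
  intro u v huv
  funext j
  have := congrFun huv ((j.val : ℕ) : ZMod n)
  rwa [Phi, Phi, castHom_val_section h hn] at this

lemma per_mul (s : Wd n) {c : ℕ} (hc : per c s) (t : ℕ) : per (c * t) s := by
  induction t with
  | zero => intro i; simp
  | succ t ih =>
    intro i
    have : ((c * (t+1) : ℕ) : ZMod n) = ((c * t : ℕ) : ZMod n) + (c : ZMod n) := by
      push_cast; ring
    rw [this, ← add_assoc]
    rw [hc (i + ((c * t : ℕ) : ZMod n))]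
    exact ih i

lemma exists_phi (hn : n ≠ 0) {s : Wd n} (hp : per e s) : ∃ u : Wd e, s = Phi h u := by
  haveI : NeZero n := ⟨hn⟩
  haveI : NeZero e := ⟨fun h0 => hn (by simpa [h0] using h)⟩
  refine ⟨fun j => s ((j.val : ℕ) : ZMod n), ?_⟩
  funext i
  show s i = s (((ZMod.castHom h (ZMod e) i).val : ℕ) : ZMod n)
  have hival : ((i.val : ℕ) : ZMod n) = i := ZMod.natCast_zmod_val i
  have hc : (ZMod.castHom h (ZMod e) i).val = i.val % e := by
    conv_lhs => rw [← hival]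
    rw [castHom_natCast, ZMod.val_natCast]
  rw [hc]
  have hi2 : i = ((i.val % e : ℕ) : ZMod n) + ((e * (i.val / e) : ℕ) : ZMod n) := by
    conv_lhs => rw [← hival]
    rw [← Nat.cast_add, Nat.mod_add_div]
  conv_lhs => rw [hi2]
  exact per_mul s hp (i.val / e) _
end Phi

noncomputable def ones [NeZero n] (s : Wd n) : ℕ :=
  (Finset.univ.filter (fun i => s i = 1)).card

lemma numOnes3_eq [NeZero n] (s : Wd n) : numOnes3 s = ones s := by
  rw [numOnes3, Nat.card_eq_fintype_card, Fintype.card_subtype, ones]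

lemma ones_phi {e : ℕ} [NeZero n] [NeZero e] (h : e ∣ n) (u : Wd e) :
    ∃ k : ℕ, e * k = n ∧ ones (Phi h u) = k * ones u := by
  have hn : n ≠ 0 := NeZero.ne n
  classical
  set π := ZMod.castHom h (ZMod e) with hπ
  set k := (Finset.univ.filter (fun i : ZMod n => π i = 0)).card with hk
  have fiber_card : ∀ j : ZMod e,
      (Finset.univ.filter (fun i : ZMod n => π i = j)).card = k := by
    intro j
    rw [hk]
    apply Finset.card_bij (fun i _ => i - ((j.val : ℕ) : ZMod n))
    · intro a ha
      simp only [Finset.mem_filter, Finset.mem_univ, true_and] at ha ⊢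
      rw [map_sub, ha, castHom_val_section h hn, sub_self]
    · intro a ha b hb hab
      exact sub_left_injective hab
    · intro b hb
      simp only [Finset.mem_filter, Finset.mem_univ, true_and] at hb
      refine ⟨b + ((j.val : ℕ) : ZMod n), ?_, by ring⟩
      simp only [Finset.mem_filter, Finset.mem_univ, true_and, map_add, hb,
        castHom_val_section h hn, zero_add]
      exact castHom_val_section h hn j
  refine ⟨k, ?_, ?_⟩
  · have := Finset.card_eq_sum_card_fiberwise
      (f := π) (s := (Finset.univ : Finset (ZMod n))) (t := Finset.univ)
      (fun x _ => Finset.mem_univ _)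
    simp only [fiber_card, Finset.sum_const, smul_eq_mul] at this
    rw [Finset.card_univ, Finset.card_univ, ZMod.card, ZMod.card] at this
    omega
  · unfold ones
    have := Finset.card_eq_sum_card_fiberwise
      (f := π) (s := Finset.univ.filter (fun i : ZMod n => Phi h u i = 1))
      (t := Finset.univ.filter (fun j : ZMod e => u j = 1))
      (by
        intro x hx
        simp only [Finset.mem_coe, Finset.mem_filter, Finset.mem_univ, true_and] at hx ⊢
        exact hx)
    rw [this]
    have heq : ∀ j ∈ Finset.univ.filter (fun j : ZMod e => u j = 1),
        ((Finset.univ.filter (fun i : ZMod n => Phi h u i = 1)).filter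
          (fun i => π i = j)).card = k := by
      intro j hj
      simp only [Finset.mem_filter, Finset.mem_univ, true_and] at hj
      rw [← fiber_card j]
      congr 1
      ext i
      simp only [Finset.mem_filter, Finset.mem_univ, true_and, Phi]
      constructor
      · rintro ⟨-, h2⟩; exact h2
      · intro h2; exact ⟨Finset.mem_filter.mpr ⟨Finset.mem_univ _, by rw [← hπ, h2, hj]⟩, h2⟩
    rw [Finset.sum_congr rfl heq, Finset.sum_const, smul_eq_mul, mul_comm]

open scoped Classical

lemma sum_sign [NeZero n] : ∑ s : Wd n, (-1:ℤ)^(ones s) = 1 := by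
  have h1 : ∀ s : Wd n, (-1:ℤ)^(ones s) = ∏ i : ZMod n, (if s i = 1 then (-1:ℤ) else 1) := by
    intro s
    rw [Finset.prod_ite, Finset.prod_const, Finset.prod_const, one_pow, mul_one, ones]
  rw [Finset.sum_congr rfl (fun s _ => h1 s)]
  have h2 := (Finset.prod_univ_sum (ι := ZMod n) (fun _ => (Finset.univ : Finset (Fin 3)))
    (fun _ a => if a = 1 then (-1:ℤ) else 1)).symm
  rw [Fintype.piFinset_univ] at h2
  rw [h2]
  have h3 : ∑ a : Fin 3, (if a = 1 then (-1:ℤ) else 1) = 1 := by decide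
  rw [Finset.prod_congr rfl (fun i _ => h3), Finset.prod_const, one_pow]

noncomputable def Fsgn (n : ℕ) : ℤ :=
  if h : n = 0 then 0 else
    haveI : NeZero n := ⟨h⟩
    ∑ u ∈ Finset.univ.filter (fun u : Wd n => IsPrimitiveWord u), (-1:ℤ)^(ones u)

lemma Fsgn_eq (n : ℕ) [NeZero n] :
    Fsgn n = ∑ u ∈ Finset.univ.filter (fun u : Wd n => IsPrimitiveWord u), (-1:ℤ)^(ones u) := by
  rw [Fsgn, dif_neg (NeZero.ne n)]

lemma decomp (hn : n ≠ 0) (hodd : Odd n) : ∑ e ∈ n.divisors, Fsgn e = 1 := by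
  haveI : NeZero n := ⟨hn⟩
  rw [← sum_sign (n := n)]
  have hmaps : ∀ s : Wd n, s ∈ (Finset.univ : Finset (Wd n)) → minp s ∈ n.divisors := by
    intro s _
    exact Nat.mem_divisors.mpr ⟨minp_dvd_n s, hn⟩
  rw [← Finset.sum_fiberwise_of_maps_to hmaps (fun s => (-1:ℤ)^(ones s))]
  apply Finset.sum_congr rfl
  intro e he
  obtain ⟨hdvd, -⟩ := Nat.mem_divisors.mp he
  have hne : e ≠ 0 := fun h0 => hn (by simpa [h0] using hdvd)
  haveI : NeZero e := ⟨hne⟩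
  rw [Fsgn_eq]
  apply Finset.sum_bij (fun (u : Wd e) _ => Phi hdvd u)
  · intro u hu
    simp only [Finset.mem_filter, Finset.mem_univ, true_and] at hu ⊢
    rw [minp_phi hdvd hn u]
    exact (prim_iff_minp hne).mp hu
  · intro u₁ h₁ u₂ h₂ heq
    exact phi_injective hdvd hn heq
  · intro s hs
    simp only [Finset.mem_filter, Finset.mem_univ, true_and] at hs
    have hper : per e s := minp_dvd_iff.mp (hs ▸ dvd_rfl)
    obtain ⟨u, rfl⟩ := exists_phi hdvd hn hper
    refine ⟨u, ?_, rfl⟩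
    simp only [Finset.mem_filter, Finset.mem_univ, true_and]
    apply (prim_iff_minp hne).mpr
    rw [← minp_phi hdvd hn u, hs]
  · intro u hu
    obtain ⟨k, hk, hones⟩ := ones_phi hdvd u
    have hkodd : Odd k := by
      rcases Nat.even_or_odd k with hk2 | hk2
      · exfalso
        have h2 : (2 : ℕ) ∣ n := hk ▸ Dvd.dvd.mul_left (even_iff_two_dvd.mp hk2) e
        rw [Nat.odd_iff] at hodd
        omega
      · exact hk2
    rw [hones, pow_mul, Odd.neg_one_pow hkodd]


lemma Fsgn_one : Fsgn 1 = 1 := by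
  rw [Fsgn_eq 1]
  have huniv : (Finset.univ.filter (fun u : Wd 1 => IsPrimitiveWord u)) = Finset.univ := by
    apply Finset.filter_true_of_mem
    intro u _ r hr
    exact absurd (Subsingleton.elim r 0) hr
  rw [huniv, sum_sign]

lemma odd_of_dvd {a b : ℕ} (h : a ∣ b) (hb : Odd b) : Odd a := by
  rcases Nat.even_or_odd a with he | ho
  · rw [Nat.odd_iff] at hb
    have h2 : (2:ℕ) ∣ b := dvd_trans (even_iff_two_dvd.mp he) h
    omega
  · exact ho

lemma Fsgn_eq_zero : ∀ n : ℕ, Odd n → 1 < n → Fsgn n = 0 := by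
  intro n
  induction n using Nat.strong_induction_on with
  | _ n ih =>
    intro hodd h1
    have hn : n ≠ 0 := by omega
    have hdec := decomp hn hodd
    rw [← Nat.cons_self_properDivisors hn, Finset.sum_cons] at hdec
    have h1mem : 1 ∈ n.properDivisors := Nat.one_mem_properDivisors_iff_one_lt.mpr h1
    rw [← Finset.sum_erase_add _ _ h1mem] at hdec
    have hz : ∀ e ∈ n.properDivisors.erase 1, Fsgn e = 0 := by
      intro e hee
      obtain ⟨hne1, hep⟩ := Finset.mem_erase.mp hee
      obtain ⟨hdvd, hlt⟩ := Nat.mem_properDivisors.mp hep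
      have hne0 : e ≠ 0 := fun h0 => hn (by simpa [h0] using hdvd)
      exact ih e hlt (odd_of_dvd hdvd hodd) (by omega)
    rw [Finset.sum_congr rfl hz] at hdec
    simp only [Finset.sum_const, smul_zero, zero_add, Fsgn_one] at hdec
    linarith

lemma counts (n : ℕ) [NeZero n] (h0 : Fsgn n = 0) :
    (Finset.univ.filter (fun s : Wd n => IsPrimitiveWord s)).card
      = 2 * (Finset.univ.filter (fun s : Wd n => IsPrimitiveWord s ∧ Odd (ones s))).card := by
  classical
  set A := Finset.univ.filter (fun s : Wd n => IsPrimitiveWord s) with hA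
  set p : Wd n → Prop := fun s => Odd (ones s) with hp
  have hsplit := Finset.sum_filter_add_sum_filter_not A p (fun s => (-1:ℤ)^(ones s))
  have hOsum : ∑ s ∈ A.filter p, (-1:ℤ)^(ones s) = -((A.filter p).card : ℤ) := by
    rw [Finset.sum_congr rfl (fun s hs => Odd.neg_one_pow (Finset.mem_filter.mp hs).2)]
    simp
    rfl
  have hEsum : ∑ s ∈ A.filter (fun s => ¬ p s), (-1:ℤ)^(ones s) = ((A.filter (fun s => ¬ p s)).card : ℤ) := by
    rw [Finset.sum_congr rfl (fun s hs => Even.neg_one_pow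
      (Nat.not_odd_iff_even.mp (Finset.mem_filter.mp hs).2))]
    rw [Finset.sum_const, nsmul_eq_mul, mul_one]
  rw [hOsum, hEsum, ← Fsgn_eq, h0] at hsplit
  have hcards := Finset.card_filter_add_card_filter_not (s := A) (p := p)
  have heq : (Finset.univ.filter (fun s : Wd n => IsPrimitiveWord s ∧ Odd (ones s))) = A.filter p := by
    rw [hA, Finset.filter_filter]
  rw [heq]
  omega

lemma orbit_count (hn : n ≠ 0) (A : Wd n → Prop)
    (hinv : ∀ (s : Wd n) (r : ZMod n), A s → A (fun i => s (i + r)))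
    (hprim : ∀ s, A s → IsPrimitiveWord s) :
    Nat.card {x : Necklace n 3 // ∃ s : ZMod n → Fin 3, A s ∧ Quotient.mk (rotSetoid n 3) s = x} * n
      = Nat.card {s : Wd n // A s} := by
  classical
  haveI : NeZero n := ⟨hn⟩
  have hout : ∀ x : Quotient (rotSetoid n 3), (∃ s, A s ∧ Quotient.mk (rotSetoid n 3) s = x) →
      A (Quotient.out x) := by
    rintro x ⟨s, hs, hq⟩
    have hx : Quotient.mk (rotSetoid n 3) (Quotient.out x) = Quotient.mk (rotSetoid n 3) s := by
      rw [Quotient.out_eq, hq]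
    have hrel : rotEquiv s (Quotient.out x) := (rotSetoid n 3).iseqv.symm (Quotient.exact hx)
    obtain ⟨r, hr⟩ := hrel
    rw [hr]
    exact hinv s r hs
  set T := {x : Necklace n 3 // ∃ s : ZMod n → Fin 3, A s ∧ Quotient.mk (rotSetoid n 3) s = x}
    with hT
  let g : T × ZMod n → {s : Wd n // A s} := fun p =>
    ⟨fun i => Quotient.out (p.1.1 : Quotient (rotSetoid n 3)) (i + p.2),
      hinv _ _ (hout _ p.1.2)⟩
  have hbij : Function.Bijective g := by
    constructor
    · rintro ⟨⟨x, hx⟩, r⟩ ⟨⟨y, hy⟩, r'⟩ heq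
      simp only [g, Subtype.mk.injEq] at heq
      have hxy : x = y := by
        rw [← Quotient.out_eq (x : Quotient (rotSetoid n 3)),
          ← Quotient.out_eq (y : Quotient (rotSetoid n 3))]
        apply Quotient.sound
        refine ⟨r - r', funext fun j => ?_⟩
        have h1 := congrFun heq (j - r')
        have h2 : j - r' + r' = j := by ring
        have h3 : j - r' + r = j + (r - r') := by ring
        rw [h2, h3] at h1
        exact h1.symm
      subst hxy
      have hprimx := hprim _ (hout _ hx)
      have hrr : r = r' := by
        by_contra hne
        apply hprimx (r - r') (sub_ne_zero.mpr hne)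
        funext i
        have h1 := congrFun heq (i - r')
        have h2 : i - r' + r' = i := by ring
        have h3 : i - r' + r = i + (r - r') := by ring
        rw [h2, h3] at h1
        exact h1
      subst hrr
      rfl
    · rintro ⟨s, hs⟩
      obtain ⟨r, hr⟩ := Quotient.exact
        (Quotient.out_eq (Quotient.mk (rotSetoid n 3) s) :
          Quotient.mk (rotSetoid n 3) (Quotient.out (Quotient.mk (rotSetoid n 3) s))
            = Quotient.mk (rotSetoid n 3) s)
      exact ⟨⟨⟨Quotient.mk (rotSetoid n 3) s, ⟨s, hs, rfl⟩⟩, r⟩, Subtype.ext hr.symm⟩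
  have hcard := Nat.card_congr (Equiv.ofBijective g hbij)
  rw [Nat.card_prod, Nat.card_zmod] at hcard
  exact hcard

lemma prim_shift {s : Wd n} (hp : IsPrimitiveWord s) (r : ZMod n) :
    IsPrimitiveWord (fun i => s (i + r)) := by
  intro r' hr' habs
  apply hp r' hr'
  funext i
  have h1 := congrFun habs (i - r)
  simp only at h1
  have h2 : i - r + r' + r = i + r' := by ring
  have h3 : i - r + r = i := by ring
  rw [h2, h3] at h1
  exact h1

lemma numOnes3_shift (s : Wd n) (r : ZMod n) :
    numOnes3 (fun i => s (i + r)) = numOnes3 s := by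
  exact Nat.card_congr (Equiv.subtypeEquiv (Equiv.addRight r) (fun i => Iff.rfl))

theorem stmt_5' (m : ℕ) (hm : 3 ≤ m) (hodd : Odd m) :
    (Nat.card {x : Necklace m 3 // ∃ s : ZMod m → Fin 3,
        IsPrimitiveWord s ∧ Odd (numOnes3 s) ∧ Quotient.mk (rotSetoid m 3) s = x} : ℚ) =
      (Nat.card {x : Necklace m 3 // ∃ s : ZMod m → Fin 3,
        IsPrimitiveWord s ∧ Quotient.mk (rotSetoid m 3) s = x} : ℚ) / 2 := by
  classical
  have hn : m ≠ 0 := by omega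
  haveI : NeZero m := ⟨hn⟩
  set A1 : Wd m → Prop := fun s => IsPrimitiveWord s ∧ Odd (ones s) with hA1
  have hinv1 : ∀ (s : Wd m) (r : ZMod m), A1 s → A1 (fun i => s (i + r)) := by
    rintro s r ⟨hp, ho⟩
    refine ⟨prim_shift hp r, ?_⟩
    rwa [← numOnes3_eq, numOnes3_shift, numOnes3_eq]
  have hinv2 : ∀ (s : Wd m) (r : ZMod m), IsPrimitiveWord s →
      IsPrimitiveWord (fun i => s (i + r)) := fun s r hp => prim_shift hp r
  have h1 := orbit_count hn A1 hinv1 (fun s h => h.1)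
  have h2 := orbit_count hn (fun s => IsPrimitiveWord s) hinv2 (fun s h => h)
  have hcongr1 : Nat.card {x : Necklace m 3 // ∃ s : ZMod m → Fin 3,
      IsPrimitiveWord s ∧ Odd (numOnes3 s) ∧ Quotient.mk (rotSetoid m 3) s = x}
      = Nat.card {x : Necklace m 3 // ∃ s : ZMod m → Fin 3,
        A1 s ∧ Quotient.mk (rotSetoid m 3) s = x} :=
    Nat.card_congr (Equiv.subtypeEquivRight (fun x => by
      constructor
      · rintro ⟨s, hs1, hs2, hs3⟩
        exact ⟨s, ⟨hs1, by rwa [← numOnes3_eq]⟩, hs3⟩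
      · rintro ⟨s, ⟨hs1, hs2⟩, hs3⟩
        exact ⟨s, hs1, by rwa [numOnes3_eq], hs3⟩))
  have hw1 : Nat.card {s : Wd m // A1 s}
      = (Finset.univ.filter (fun s : Wd m => IsPrimitiveWord s ∧ Odd (ones s))).card := by
    rw [Nat.card_eq_fintype_card, Fintype.card_subtype]
  have hw2 : Nat.card {s : Wd m // IsPrimitiveWord s}
      = (Finset.univ.filter (fun s : Wd m => IsPrimitiveWord s)).card := by
    rw [Nat.card_eq_fintype_card, Fintype.card_subtype]
  have hF0 : Fsgn m = 0 := Fsgn_eq_zero m hodd (by omega)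
  have hcount := counts m hF0
  rw [hw1] at h1
  rw [hw2] at h2
  rw [hcongr1]
  set N1 := Nat.card {x : Necklace m 3 // ∃ s : ZMod m → Fin 3,
    A1 s ∧ Quotient.mk (rotSetoid m 3) s = x} with hN1
  set N2 := Nat.card {x : Necklace m 3 // ∃ s : ZMod m → Fin 3,
    IsPrimitiveWord s ∧ Quotient.mk (rotSetoid m 3) s = x} with hN2
  have hNN : N2 * m = 2 * N1 * m := by
    rw [h2, hcount, ← h1]
    ring
  have hfin : N2 = 2 * N1 := Nat.eq_of_mul_eq_mul_right (by omega) hNN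
  rw [hfin]
  push_cast
  ring

/-- for odd `m ≥ 3`, the number of primitive ternary necklaces of length `m`
with an odd number of ones is exactly half the total number of primitive ternary
necklaces of length `m`. -/
theorem stmt_5 (m : ℕ) (hm : 3 ≤ m) (hodd : Odd m) :
    (Nat.card {x : Necklace m 3 // ∃ s : ZMod m → Fin 3,
        IsPrimitiveWord s ∧ Odd (numOnes3 s) ∧ Quotient.mk (rotSetoid m 3) s = x} : ℚ) =
      (Nat.card {x : Necklace m 3 // ∃ s : ZMod m → Fin 3,
        IsPrimitiveWord s ∧ Quotient.mk (rotSetoid m 3) s = x} : ℚ) / 2 :=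
  stmt_5' m hm hodd
end Words
end

section
/- If m ≥ 3 is odd, then the number of primitive ternary necklaces of length m with an odd number of 1's equals the number of primitive ternary necklaces of length m with an even number of 1's. -/
namespace NeckAux

def rotW {n k : ℕ} (r : ZMod n) (s : ZMod n → Fin k) : ZMod n → Fin k :=
  fun i => s (i + r)

lemma numOnes3_rotW {n : ℕ} (s : ZMod n → Fin 3) (r : ZMod n) :
    numOnes3 (rotW r s) = numOnes3 s := by
  unfold numOnes3
  exact Nat.card_congr (Equiv.subtypeEquiv (Equiv.addRight r) (fun i => by
    simp [rotW, Equiv.addRight]))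

lemma isPrim_rotW {n k : ℕ} {s : ZMod n → Fin k} (hs : IsPrimitiveWord s) (r : ZMod n) :
    IsPrimitiveWord (rotW r s) := by
  intro r' hr' heq
  apply hs r' hr'
  funext i
  have h2 := congrFun heq (i - r)
  simp only [rotW] at h2 ⊢
  have e1 : i - r + r' + r = i + r' := by ring
  have e2 : i - r + r = i := by ring
  rw [e1, e2] at h2
  exact h2

def natPer {n : ℕ} (s : ZMod n → Fin 3) (e : ℕ) : Prop :=
  ∀ i : ZMod n, s (i + (e : ZMod n)) = s i

lemma natPer_self {n : ℕ} [NeZero n] (s : ZMod n → Fin 3) : natPer s n := by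
  intro i; simp [ZMod.natCast_self]

lemma natPer_add {n : ℕ} {s : ZMod n → Fin 3} {e f : ℕ} (he : natPer s e) (hf : natPer s f) :
    natPer s (e + f) := by
  intro i
  have := he (i + (f : ZMod n))
  rw [hf i] at this
  rw [← this]
  push_cast
  ring_nf

lemma natPer_mul {n : ℕ} {s : ZMod n → Fin 3} {e : ℕ} (he : natPer s e) (q : ℕ) :
    natPer s (q * e) := by
  induction q with
  | zero => intro i; simp
  | succ q ih =>
    have := natPer_add ih he
    rwa [show (q+1)*e = q*e+e by ring]

lemma natPer_sub {n : ℕ} {s : ZMod n → Fin 3} {e f : ℕ} (he : natPer s e) (hf : natPer s f)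
    (hfe : f ≤ e) : natPer s (e - f) := by
  intro i
  have h1 := hf (i + ((e - f : ℕ) : ZMod n))
  rw [add_assoc, ← Nat.cast_add, Nat.sub_add_cancel hfe] at h1
  rw [he i] at h1
  exact h1.symm

end NeckAux

namespace NeckAux

instance natPer_dec {n : ℕ} [NeZero n] (s : ZMod n → Fin 3) (e : ℕ) : Decidable (natPer s e) := by
  unfold natPer; infer_instance

/-- existence of a positive period -/
lemma exPer {n : ℕ} [NeZero n] (s : ZMod n → Fin 3) : ∃ e, 0 < e ∧ natPer s e :=
  ⟨n, Nat.pos_of_ne_zero (NeZero.ne n), natPer_self s⟩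

lemma find_dvd_of_natPer {n : ℕ} [NeZero n] (s : ZMod n → Fin 3) :
    ∀ e, natPer s e → Nat.find (exPer s) ∣ e := by
  intro e
  induction e using Nat.strong_induction_on with
  | _ e ih =>
    intro he
    rcases Nat.eq_zero_or_pos e with h0 | hpos
    · simp [h0]
    set d := Nat.find (exPer s) with hdef
    have hd := Nat.find_spec (exPer s)
    rw [← hdef] at hd
    have hle : d ≤ e := Nat.find_min' (exPer s) ⟨hpos, he⟩
    rcases Nat.lt_or_ge e d with h | h
    · omega
    · rcases Nat.eq_or_lt_of_le h with h' | h'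
      · exact h' ▸ dvd_refl d
      · have hsub : natPer s (e - d) := natPer_sub he hd.2 hle
        have : e - d < e := by omega
        have hdvd := ih (e - d) this hsub
        have : e = (e - d) + d := by omega
        rw [this]
        exact Nat.dvd_add hdvd (dvd_refl d)

/-- lift a word of length `d` to length `n` when `d ∣ n` -/
def liftW {n d : ℕ} (h : d ∣ n) (t : ZMod d → Fin 3) : ZMod n → Fin 3 :=
  fun i => t (ZMod.castHom h (ZMod d) i)

lemma castHom_surj {n d : ℕ} [NeZero d] (h : d ∣ n) :
    Function.Surjective (ZMod.castHom h (ZMod d)) := by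
  intro j
  refine ⟨((j.val : ℕ) : ZMod n), ?_⟩
  rw [map_natCast]
  exact ZMod.natCast_rightInverse j

lemma natPer_liftW_iff {n d : ℕ} [NeZero d] (h : d ∣ n) {t : ZMod d → Fin 3}
    (ht : IsPrimitiveWord t) (e : ℕ) : natPer (liftW h t) e ↔ d ∣ e := by
  constructor
  · intro hp
    rw [← ZMod.natCast_eq_zero_iff]
    by_contra hne
    apply ht _ hne
    funext j
    obtain ⟨i, rfl⟩ := castHom_surj h j
    have := hp i
    simp only [liftW] at this
    rw [map_add, map_natCast] at this
    exact this
  · intro hdvd i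
    simp only [liftW]
    rw [map_add, map_natCast, (ZMod.natCast_eq_zero_iff e d).2 hdvd, add_zero]

end NeckAux

namespace NeckAux
open Finset

lemma fiber_card_const {n d : ℕ} [NeZero n] [NeZero d] (h : d ∣ n) (j : ZMod d) :
    (univ.filter fun i : ZMod n => ZMod.castHom h (ZMod d) i = j).card
      = (univ.filter fun i : ZMod n => ZMod.castHom h (ZMod d) i = 0).card := by
  obtain ⟨i0, hi0⟩ := castHom_surj h j
  apply Finset.card_bij' (fun i _ => i - i0) (fun i _ => i + i0)
  · intro a ha
    simp only [mem_filter, mem_univ, true_and] at ha ⊢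
    rw [map_sub, ha, hi0, sub_self]
  · intro a ha
    simp only [mem_filter, mem_univ, true_and] at ha ⊢
    rw [map_add, ha, hi0, zero_add]
  · intro a _; ring
  · intro a _; ring

lemma fiber_card_mul {n d : ℕ} [NeZero n] [NeZero d] (h : d ∣ n) :
    (univ.filter fun i : ZMod n => ZMod.castHom h (ZMod d) i = 0).card * d = n := by
  have h1 := Finset.card_eq_sum_card_fiberwise
    (s := (univ : Finset (ZMod n))) (t := (univ : Finset (ZMod d)))
    (f := fun i => ZMod.castHom h (ZMod d) i) (fun x _ => mem_univ _)
  rw [Finset.card_univ, ZMod.card] at h1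
  rw [Finset.sum_congr rfl (fun j _ => fiber_card_const h j), Finset.sum_const,
    Finset.card_univ, ZMod.card, smul_eq_mul] at h1
  rw [mul_comm]
  exact h1.symm

lemma numOnes3_eq_filter {n : ℕ} [NeZero n] (s : ZMod n → Fin 3) :
    numOnes3 s = (univ.filter fun i : ZMod n => s i = 1).card := by
  rw [numOnes3, Nat.card_eq_fintype_card, Fintype.card_subtype]

lemma numOnes3_liftW {n d : ℕ} [NeZero n] [NeZero d] (h : d ∣ n) (t : ZMod d → Fin 3) :
    numOnes3 (liftW h t) * d = numOnes3 t * n := by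
  classical
  set K := (univ.filter fun i : ZMod n => ZMod.castHom h (ZMod d) i = 0).card with hK
  have hfib : ∀ j : ZMod d, (univ.filter fun i : ZMod n => ZMod.castHom h (ZMod d) i = j).card = K :=
    fun j => fiber_card_const h j
  have h1 : numOnes3 (liftW h t) = numOnes3 t * K := by
    rw [numOnes3_eq_filter, numOnes3_eq_filter]
    have h2 := Finset.card_eq_sum_card_fiberwise
      (s := univ.filter fun i : ZMod n => liftW h t i = 1)
      (t := univ.filter fun j : ZMod d => t j = 1)
      (f := fun i => ZMod.castHom h (ZMod d) i)
      (fun x hx => by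
        simp only [coe_filter, mem_univ, true_and, Set.mem_setOf_eq] at hx ⊢
        exact hx)
    rw [h2]
    rw [Finset.sum_congr rfl (fun j hj => ?_), Finset.sum_const, smul_eq_mul]
    rw [Finset.filter_filter]
    rw [← hfib j]
    congr 1
    apply Finset.filter_congr
    intro i _
    simp only [mem_filter, mem_univ, true_and] at hj
    constructor
    · rintro ⟨-, h2⟩; exact h2
    · intro h2; exact ⟨by simp only [liftW, h2, hj], h2⟩
  rw [h1, mul_assoc, fiber_card_mul h]

end NeckAux

namespace NeckAux
open Finset

lemma exists_lift {n : ℕ} [NeZero n] (s : ZMod n → Fin 3) :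
    ∃ (d : ℕ) (hd : d ∣ n), d ≠ 0 ∧ ∃ t : ZMod d → Fin 3, IsPrimitiveWord t ∧ liftW hd t = s := by
  classical
  set d := Nat.find (exPer s) with hdef
  have hspec := Nat.find_spec (exPer s)
  rw [← hdef] at hspec
  have hdpos : 0 < d := hspec.1
  have hdper : natPer s d := hspec.2
  haveI : NeZero d := ⟨by omega⟩
  have hd : d ∣ n := find_dvd_of_natPer s n (natPer_self s)
  set t : ZMod d → Fin 3 := fun j => s ((j.val : ℕ) : ZMod n) with ht
  have hlift : ∀ i, liftW hd t i = s i := by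
    intro i
    have hi : ((i.val : ℕ) : ZMod n) = i := ZMod.natCast_rightInverse i
    have hφ : ZMod.castHom hd (ZMod d) i = ((i.val : ℕ) : ZMod d) := by
      conv_lhs => rw [← hi]
      rw [map_natCast]
    simp only [liftW, hφ, ht]
    rw [ZMod.val_natCast]
    have hper := natPer_mul hdper (i.val / d) (((i.val % d : ℕ) : ZMod n))
    rw [← Nat.cast_add, Nat.mod_add_div' i.val d, hi] at hper
    exact hper.symm
  have hprim : IsPrimitiveWord t := by
    intro r hr0 hre
    set e := r.val with he
    have he0 : 0 < e := ZMod.val_pos.mpr hr0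
    have helt : e < d := ZMod.val_lt r
    have hper : natPer s e := by
      intro i
      rw [← hlift (i + (e : ZMod n)), ← hlift i]
      simp only [liftW]
      rw [map_add, map_natCast]
      have : ((e : ℕ) : ZMod d) = r := ZMod.natCast_rightInverse r
      rw [this]
      exact congrFun hre (ZMod.castHom hd (ZMod d) i)
    exact Nat.find_min (exPer s) (hdef ▸ helt) ⟨he0, hper⟩
  exact ⟨d, hd, by omega, t, hprim, funext hlift⟩

noncomputable def Dd (d : ℕ) : ℤ :=
  (Nat.card {t : ZMod d → Fin 3 // IsPrimitiveWord t ∧ Even (numOnes3 t)} : ℤ)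
    - (Nat.card {t : ZMod d → Fin 3 // IsPrimitiveWord t ∧ Odd (numOnes3 t)} : ℤ)

lemma sum_neg_pow {α : Type*} [Fintype α] (g : α → ℕ) :
    ∑ a, ((-1 : ℤ))^(g a) = (Nat.card {a // Even (g a)} : ℤ) - (Nat.card {a // Odd (g a)} : ℤ) := by
  classical
  rw [Finset.sum_congr rfl (fun a _ => show ((-1:ℤ))^g a = if Even (g a) then 1 else -1 from by
    by_cases hx : Even (g a)
    · rw [if_pos hx, Even.neg_one_pow hx]
    · rw [if_neg hx, Odd.neg_one_pow (Nat.not_even_iff_odd.mp hx)])]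
  rw [Finset.sum_ite, Finset.sum_const, Finset.sum_const]
  rw [Nat.card_eq_fintype_card, Nat.card_eq_fintype_card, Fintype.card_subtype,
    Fintype.card_subtype]
  have : univ.filter (fun a => Odd (g a)) = univ.filter (fun a => ¬ Even (g a)) := by
    apply filter_congr; intro a _
    exact Nat.not_even_iff_odd.symm
  rw [this]
  push_cast [smul_eq_mul]
  ring

lemma Dd_eq_sum (d : ℕ) [NeZero d] [Fintype {t : ZMod d → Fin 3 // IsPrimitiveWord t}] :
    Dd d = ∑ t : {t : ZMod d → Fin 3 // IsPrimitiveWord t}, ((-1 : ℤ))^(numOnes3 t.1) := by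
  classical
  rw [sum_neg_pow (fun t : {t : ZMod d → Fin 3 // IsPrimitiveWord t} => numOnes3 t.1), Dd]
  congr 2
  · exact (Nat.card_congr (Equiv.subtypeSubtypeEquivSubtypeInter _ _)).symm
  · exact (Nat.card_congr (Equiv.subtypeSubtypeEquivSubtypeInter _ _)).symm

end NeckAux

namespace NeckAux
open Finset

lemma signed_sum_words (n : ℕ) [NeZero n] :
    ∑ s : ZMod n → Fin 3, ((-1 : ℤ))^(numOnes3 s) = 1 := by
  classical
  have h1 : ∀ s : ZMod n → Fin 3, ((-1:ℤ))^(numOnes3 s)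
      = ∏ i : ZMod n, ((-1:ℤ))^(if s i = 1 then (1:ℕ) else 0) := by
    intro s
    rw [numOnes3_eq_filter, Finset.card_filter, Finset.prod_pow_eq_pow_sum]
  rw [Finset.sum_congr rfl (fun s _ => h1 s),
    ← Fintype.prod_sum (fun (_ : ZMod n) (j : Fin 3) => ((-1:ℤ))^(if j = 1 then (1:ℕ) else 0))]
  have h2 : ∀ _i : ZMod n, (∑ j : Fin 3, ((-1:ℤ))^(if j = 1 then (1:ℕ) else 0)) = 1 := by
    intro _
    rw [Fin.sum_univ_three]
    norm_num
    omega
  rw [Finset.prod_congr rfl (fun i _ => h2 i), Finset.prod_const_one]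

end NeckAux

namespace NeckAux
open Finset

lemma odd_of_dvd_odd {d n : ℕ} (h : d ∣ n) (hn : Odd n) : Odd d := by
  obtain ⟨c, rfl⟩ := h
  exact (Nat.odd_mul.mp hn).1

lemma signed_sum_eq_sum_Dd (n : ℕ) [NeZero n] (hodd : Odd n) :
    ∑ s : ZMod n → Fin 3, ((-1 : ℤ))^(numOnes3 s) = ∑ d ∈ n.divisors, Dd d := by
  classical
  haveI : ∀ d : n.divisors, NeZero d.1 := fun d => ⟨(Nat.pos_of_mem_divisors d.2).ne'⟩
  set Φ : (Σ d : n.divisors, {t : ZMod d.1 → Fin 3 // IsPrimitiveWord t}) → (ZMod n → Fin 3) :=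
    fun p => liftW (Nat.dvd_of_mem_divisors p.1.2) p.2.1 with hΦ
  have hbij : Function.Bijective Φ := by
    constructor
    · rintro ⟨⟨d, hd⟩, ⟨t, ht⟩⟩ ⟨⟨d', hd'⟩, ⟨t', ht'⟩⟩ heq
      haveI : NeZero d := ⟨(Nat.pos_of_mem_divisors hd).ne'⟩
      haveI : NeZero d' := ⟨(Nat.pos_of_mem_divisors hd').ne'⟩
      simp only [hΦ] at heq
      have hdvd1 : d' ∣ d := by
        have h1 : natPer (liftW (Nat.dvd_of_mem_divisors hd) t) d :=
          (natPer_liftW_iff _ ht d).2 dvd_rfl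
        rw [heq] at h1
        exact (natPer_liftW_iff _ ht' d).1 h1
      have hdvd2 : d ∣ d' := by
        have h1 : natPer (liftW (Nat.dvd_of_mem_divisors hd') t') d' :=
          (natPer_liftW_iff _ ht' d').2 dvd_rfl
        rw [← heq] at h1
        exact (natPer_liftW_iff _ ht d').1 h1
      have hdd : d = d' := Nat.dvd_antisymm hdvd2 hdvd1
      subst hdd
      have htt : t = t' := by
        funext j
        obtain ⟨i, rfl⟩ := castHom_surj (Nat.dvd_of_mem_divisors hd) j
        exact congrFun heq i
      subst htt
      rfl
    · intro s
      obtain ⟨d, hd, hd0, t, hprim, hlift⟩ := exists_lift s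
      exact ⟨⟨⟨d, Nat.mem_divisors.2 ⟨hd, NeZero.ne n⟩⟩, ⟨t, hprim⟩⟩, hlift⟩
  have hcompat : ∀ p, ((-1:ℤ))^(numOnes3 p.2.1) = ((-1:ℤ))^(numOnes3 (Φ p)) := by
    rintro ⟨⟨d, hd⟩, ⟨t, ht⟩⟩
    haveI : NeZero d := ⟨(Nat.pos_of_mem_divisors hd).ne'⟩
    have h1 := numOnes3_liftW (Nat.dvd_of_mem_divisors hd) t
    have hd_odd : Odd d := odd_of_dvd_odd (Nat.dvd_of_mem_divisors hd) hodd
    have hpar : Odd (numOnes3 t) ↔ Odd (numOnes3 (liftW (Nat.dvd_of_mem_divisors hd) t)) := by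
      constructor
      · intro h
        have : Odd (numOnes3 (liftW (Nat.dvd_of_mem_divisors hd) t) * d) := by
          rw [h1]; exact Nat.odd_mul.2 ⟨h, hodd⟩
        exact (Nat.odd_mul.1 this).1
      · intro h
        have : Odd (numOnes3 t * n) := by
          rw [← h1]; exact Nat.odd_mul.2 ⟨h, hd_odd⟩
        exact (Nat.odd_mul.1 this).1
    rcases Nat.even_or_odd (numOnes3 t) with he | ho
    · rw [Even.neg_one_pow he, Even.neg_one_pow]
      rw [← Nat.not_odd_iff_even] at he ⊢
      exact fun hc => he (hpar.2 hc)
    · rw [Odd.neg_one_pow ho, Odd.neg_one_pow (hpar.1 ho)]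
  rw [← Fintype.sum_bijective Φ hbij _ _ hcompat]
  rw [← Finset.univ_sigma_univ, Finset.sum_sigma]
  rw [Finset.sum_congr rfl (fun d _ => ?_), Finset.sum_coe_sort n.divisors Dd]
  haveI : NeZero d.1 := ⟨(Nat.pos_of_mem_divisors d.2).ne'⟩
  exact (Dd_eq_sum d.1).symm

end NeckAux

namespace NeckAux
open Finset

lemma Dd_one : Dd 1 = 1 := by
  classical
  rw [Dd_eq_sum 1]
  have hall : ∀ t : ZMod 1 → Fin 3, IsPrimitiveWord t := by
    intro t r hr
    exact absurd (Subsingleton.elim r 0) hr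
  have h := Fintype.sum_equiv (Equiv.subtypeUnivEquiv hall)
    (fun t : {t : ZMod 1 → Fin 3 // IsPrimitiveWord t} => ((-1:ℤ))^(numOnes3 t.1))
    (fun s : ZMod 1 → Fin 3 => ((-1:ℤ))^(numOnes3 s)) (fun t => rfl)
  rw [h, signed_sum_words 1]

lemma Dd_eq_zero : ∀ n, 3 ≤ n → Odd n → Dd n = 0 := by
  intro n
  induction n using Nat.strong_induction_on with
  | _ n ih =>
    intro h3 hodd
    haveI : NeZero n := ⟨by omega⟩
    have h1 := signed_sum_words n
    rw [signed_sum_eq_sum_Dd n hodd] at h1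
    have hmem : n ∈ n.divisors := Nat.mem_divisors_self n (by omega)
    rw [← Finset.add_sum_erase _ _ hmem] at h1
    have herase : ∑ d ∈ n.divisors.erase n, Dd d = 1 := by
      have h2 : ∀ d ∈ n.divisors.erase n, Dd d = if d = 1 then 1 else 0 := by
        intro d hd
        have hd' := Finset.mem_of_mem_erase hd
        have hdn : d ∣ n := Nat.dvd_of_mem_divisors hd'
        have hdne : d ≠ n := Finset.ne_of_mem_erase hd
        have hdlt : d < n := lt_of_le_of_ne (Nat.le_of_dvd (by omega) hdn) hdne
        by_cases hone : d = 1
        · rw [if_pos hone, hone]; exact Dd_one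
        · rw [if_neg hone]
          have hdo := odd_of_dvd_odd hdn hodd
          have hd3 : 3 ≤ d := by
            have := Nat.pos_of_mem_divisors hd'
            obtain ⟨k, hk⟩ := hdo
            omega
          exact ih d hdlt hd3 hdo
      rw [Finset.sum_congr rfl h2, Finset.sum_ite_eq' (n.divisors.erase n) 1 (fun _ => (1:ℤ))]
      rw [if_pos]
      exact Finset.mem_erase.2 ⟨by omega, Nat.one_mem_divisors.2 (by omega)⟩
    rw [herase] at h1
    linarith

end NeckAux

namespace NeckAux

lemma mk_rotW {m : ℕ} (s : ZMod m → Fin 3) (r : ZMod m) :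
    Quotient.mk (rotSetoid m 3) (rotW r s) = Quotient.mk (rotSetoid m 3) s := by
  have h : rotEquiv s (rotW r s) := ⟨r, rfl⟩
  exact (Quotient.sound h).symm

lemma card_words_eq (m : ℕ) [NeZero m] (P : ℕ → Prop) :
    Nat.card {s : ZMod m → Fin 3 // IsPrimitiveWord s ∧ P (numOnes3 s)}
      = Nat.card {x : Necklace m 3 // ∃ s : ZMod m → Fin 3,
          IsPrimitiveWord s ∧ P (numOnes3 s) ∧ Quotient.mk (rotSetoid m 3) s = x} * m := by
  classical
  set Q : Necklace m 3 → Prop := fun x => ∃ s : ZMod m → Fin 3,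
    IsPrimitiveWord s ∧ P (numOnes3 s) ∧ Quotient.mk (rotSetoid m 3) s = x with hQ
  have hout : ∀ x : {x : Necklace m 3 // Q x},
      IsPrimitiveWord (Quotient.out x.1) ∧ P (numOnes3 (Quotient.out x.1)) := by
    rintro ⟨x, s0, hp, hP, hmk⟩
    have h1 : Quotient.mk (rotSetoid m 3) (Quotient.out x) = Quotient.mk (rotSetoid m 3) s0 := by
      exact (Quotient.out_eq (x : Quotient (rotSetoid m 3))).trans hmk.symm
    have h2 : rotEquiv (Quotient.out x) s0 := Quotient.exact h1
    obtain ⟨r, hr⟩ := h2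
    have hro : Quotient.out x = rotW (-r) s0 := by
      funext i
      show Quotient.out x i = s0 (i + -r)
      rw [hr]
      congr 1
      ring
    rw [hro]
    exact ⟨isPrim_rotW hp _, by rw [numOnes3_rotW]; exact hP⟩
  set Θ : {x : Necklace m 3 // Q x} × ZMod m → {s : ZMod m → Fin 3 // IsPrimitiveWord s ∧ P (numOnes3 s)} :=
    fun p => ⟨rotW p.2 (Quotient.out p.1.1),
      isPrim_rotW (hout p.1).1 p.2, by rw [numOnes3_rotW]; exact (hout p.1).2⟩ with hΘ
  suffices hbij : Function.Bijective Θ by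
    have hc := Nat.card_congr (Equiv.ofBijective Θ hbij)
    rw [Nat.card_prod, Nat.card_zmod] at hc
    exact hc.symm
  constructor
  · rintro ⟨x, r⟩ ⟨x', r'⟩ h
    have hval : rotW r (Quotient.out x.1) = rotW r' (Quotient.out x'.1) :=
      congrArg Subtype.val h
    have hx : x = x' := by
      apply Subtype.ext
      exact ((Quotient.out_eq (s := rotSetoid m 3) x.1).symm.trans (mk_rotW _ r).symm).trans
        ((congrArg (Quotient.mk (rotSetoid m 3)) hval).trans ((mk_rotW _ _).trans (Quotient.out_eq _)))
    obtain rfl : x = x' := hx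
    have hr : r = r' := by
      by_contra hne
      apply (hout x).1 (r - r') (sub_ne_zero.2 hne)
      funext i
      have h2 := congrFun hval (i - r')
      show Quotient.out x.1 (i + (r - r')) = Quotient.out x.1 i
      simp only [rotW] at h2
      have e1 : i - r' + r = i + (r - r') := by ring
      have e2 : i - r' + r' = i := by ring
      rw [e1, e2] at h2
      exact h2
    rw [hr]
  · rintro ⟨s, hp, hP⟩
    set x : {x : Necklace m 3 // Q x} := ⟨Quotient.mk (rotSetoid m 3) s, ⟨s, hp, hP, rfl⟩⟩ with hx
    have h1 : Quotient.mk (rotSetoid m 3) (Quotient.out x.1) = Quotient.mk (rotSetoid m 3) s :=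
      Quotient.out_eq _
    have h2 : rotEquiv (Quotient.out x.1) s := Quotient.exact h1
    obtain ⟨r, hr⟩ := h2
    exact ⟨⟨x, r⟩, Subtype.ext hr.symm⟩

end NeckAux


/-- for odd `m ≥ 3`, the number of primitive ternary necklaces of length `m`
with an odd number of ones equals the number with an even number of ones. -/
theorem stmt_7 (m : ℕ) (hm : 3 ≤ m) (hodd : Odd m) :
    Nat.card {x : Necklace m 3 // ∃ s : ZMod m → Fin 3,
        IsPrimitiveWord s ∧ Odd (numOnes3 s) ∧ Quotient.mk (rotSetoid m 3) s = x} =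
      Nat.card {x : Necklace m 3 // ∃ s : ZMod m → Fin 3,
        IsPrimitiveWord s ∧ Even (numOnes3 s) ∧ Quotient.mk (rotSetoid m 3) s = x} := by
  haveI : NeZero m := ⟨by omega⟩
  have h0 : NeckAux.Dd m = 0 := NeckAux.Dd_eq_zero m hm hodd
  have hEO : Nat.card {t : ZMod m → Fin 3 // IsPrimitiveWord t ∧ Even (numOnes3 t)}
      = Nat.card {t : ZMod m → Fin 3 // IsPrimitiveWord t ∧ Odd (numOnes3 t)} := by
    have h1 := sub_eq_zero.mp h0
    exact_mod_cast h1
  apply Nat.eq_of_mul_eq_mul_right (show 0 < m by omega)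
  rw [← NeckAux.card_words_eq m Odd, ← NeckAux.card_words_eq m Even]
  exact hEO.symm
end

section
/- Let n ≥ 3. For a permutation π of [n] in the grid class S^{+−+} (i.e., π can be split into three contiguous segments, the first increasing, the second decreasing, the third increasing), define a peak as an index i with π_{i−1} < π_i > π_{i+1} (with boundary convention π_0 = π_{n+1} = 0) and a valley as an index j with π_{j−1} > π_j < π_{j+1} (with boundary convention π_0 = π_{n+1} = n+1). If π is not monotone increasing on all of [n] in a degenerate way but genuinely lies in S^{+−+} with at least one descent, then any (+−+)-segmentation 0 = e_0 ≤ e_1 ≤ e_2 ≤ e_3 = n of π with unique peak-valley pair i < j must satisfy e_1 ∈ {i−1, i} and e_2 ∈ {j−1, j}; hence π has exactly four (+−+)-segmentations. -/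
/-- The one-line word of `π` (positions `1..n`), padded with `0` outside `[1,n]`. -/
def padZero (n : ℕ) (π : ℕ → ℕ) : ℕ → ℕ := fun p => if 1 ≤ p ∧ p ≤ n then π p else 0

/-- The one-line word of `π` (positions `1..n`), padded with `n+1` outside `[1,n]`. -/
def padTop (n : ℕ) (π : ℕ → ℕ) : ℕ → ℕ := fun p => if 1 ≤ p ∧ p ≤ n then π p else n + 1

/-- `i` is a peak of `π`: `π_{i-1} < π_i > π_{i+1}` with convention `π_0 = π_{n+1} = 0`. -/
def PeakAt (n : ℕ) (π : ℕ → ℕ) (i : ℕ) : Prop :=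
  1 ≤ i ∧ i ≤ n ∧ padZero n π (i - 1) < padZero n π i ∧ padZero n π (i + 1) < padZero n π i

/-- `j` is a valley of `π`: `π_{j-1} > π_j < π_{j+1}` with convention `π_0 = π_{n+1} = n+1`. -/
def ValleyAt (n : ℕ) (π : ℕ → ℕ) (j : ℕ) : Prop :=
  1 ≤ j ∧ j ≤ n ∧ padTop n π j < padTop n π (j - 1) ∧ padTop n π j < padTop n π (j + 1)

/-- `(e1, e2)` is a `(+,-,+)`-segmentation `0 ≤ e1 ≤ e2 ≤ n` of `π`: increasing on
positions `(0,e1]`, decreasing on `(e1,e2]`, increasing on `(e2,n]`. -/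
def SegPMP (n : ℕ) (π : ℕ → ℕ) (e1 e2 : ℕ) : Prop :=
  e1 ≤ e2 ∧ e2 ≤ n ∧
  (∀ p q, 1 ≤ p → p < q → q ≤ e1 → π p < π q) ∧
  (∀ p q, e1 + 1 ≤ p → p < q → q ≤ e2 → π q < π p) ∧
  (∀ p q, e2 + 1 ≤ p → p < q → q ≤ n → π p < π q)

lemma padZero_eq (n : ℕ) (π : ℕ → ℕ) (p : ℕ) (h1 : 1 ≤ p) (h2 : p ≤ n) :
    padZero n π p = π p := by simp [padZero, h1, h2]

lemma padTop_eq (n : ℕ) (π : ℕ → ℕ) (p : ℕ) (h1 : 1 ≤ p) (h2 : p ≤ n) :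
    padTop n π p = π p := by simp [padTop, h1, h2]

lemma chainInc (f : ℕ → ℕ) (a b : ℕ)
    (h : ∀ k, a ≤ k → k + 1 ≤ b → f k < f (k + 1)) :
    ∀ p q, a ≤ p → p < q → q ≤ b → f p < f q := by
  intro p q
  induction q with
  | zero => intro _ h1 _; omega
  | succ m ih =>
    intro hap hpq hqb
    rcases Nat.lt_or_ge p m with h' | h'
    · exact (ih hap h' (by omega)).trans (h m (by omega) hqb)
    · have hpm : p = m := by omega
      subst hpm
      exact h p hap hqb

lemma chainDec (f : ℕ → ℕ) (a b : ℕ)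
    (h : ∀ k, a ≤ k → k + 1 ≤ b → f (k + 1) < f k) :
    ∀ p q, a ≤ p → p < q → q ≤ b → f q < f p := by
  intro p q
  induction q with
  | zero => intro _ h1 _; omega
  | succ m ih =>
    intro hap hpq hqb
    rcases Nat.lt_or_ge p m with h' | h'
    · exact (h m (by omega) hqb).trans (ih hap h' (by omega))
    · have hpm : p = m := by omega
      subst hpm
      exact h p hap hqb

/-- if `π ∈ S^{+-+}` has at least one descent and a unique pair `i < j` with
`i` a peak and `j` a valley, then every `(+,-,+)`-segmentation `(e1,e2)` of `π` satisfies
`e1 ∈ {i-1, i}` and `e2 ∈ {j-1, j}`, and `π` has exactly four `(+,-,+)`-segmentations. -/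
theorem stmt_9 (n : ℕ) (hn : 3 ≤ n) (π : ℕ → ℕ)
    (hperm : Set.BijOn π (Set.Icc 1 n) (Set.Icc 1 n))
    (hgrid : ∃ e1 e2, SegPMP n π e1 e2)
    (hdes : ∃ d, 1 ≤ d ∧ d < n ∧ π (d + 1) < π d)
    (i j : ℕ) (hij : i < j) (hpeak : PeakAt n π i) (hvalley : ValleyAt n π j)
    (huniq : ∀ i' j', i' < j' → PeakAt n π i' → ValleyAt n π j' → i' = i ∧ j' = j) :
    (∀ e1 e2, SegPMP n π e1 e2 → (e1 = i - 1 ∨ e1 = i) ∧ (e2 = j - 1 ∨ e2 = j)) ∧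
    Set.ncard {p : ℕ × ℕ | SegPMP n π p.1 p.2} = 4 := by
  obtain ⟨a1, a2, h12, h2n, hI1, hDm, hI2⟩ := hgrid
  obtain ⟨hi1, hin, hp1, hp2⟩ := hpeak
  obtain ⟨hj1, hjn, hv1, hv2⟩ := hvalley
  have hij2 : 2 ≤ j := by omega
  -- the peak gives a descent at i and an ascent at i-1 (if i ≥ 2)
  have hiD : π (i + 1) < π i := by
    have h2' := hp2
    rw [padZero_eq n π i hi1 hin, padZero_eq n π (i + 1) (by omega) (by omega)] at h2'
    exact h2'
  have hiA : 2 ≤ i → π (i - 1) < π i := by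
    intro h2i
    have h1' := hp1
    rw [padZero_eq n π i hi1 hin, padZero_eq n π (i - 1) (by omega) (by omega)] at h1'
    exact h1'
  -- the valley gives a descent at j-1 and an ascent at j (if j ≤ n-1)
  have hjD : π j < π (j - 1) := by
    have h1' := hv1
    rw [padTop_eq n π j hj1 hjn, padTop_eq n π (j - 1) (by omega) (by omega)] at h1'
    exact h1'
  have hjA : j + 1 ≤ n → π j < π (j + 1) := by
    intro hj'
    have h2' := hv2
    rw [padTop_eq n π j hj1 hjn, padTop_eq n π (j + 1) (by omega) hj'] at h2'
    exact h2'
  -- dichotomy from injectivity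
  have hinj := hperm.injOn
  have dich : ∀ d, 1 ≤ d → d + 1 ≤ n → ¬ π (d + 1) < π d → π d < π (d + 1) := by
    intro d h1 h2 hnd
    have hne : π d ≠ π (d + 1) := by
      intro h
      have := hinj (Set.mem_Icc.mpr ⟨h1, by omega⟩) (Set.mem_Icc.mpr ⟨by omega, h2⟩) h
      omega
    omega
  -- locate i and j relative to the given segmentation
  have hb1 : a1 ≤ i := by
    by_contra h
    push_neg at h
    have := hI1 i (i + 1) hi1 (by omega) (by omega)
    omega
  have hia2 : i ≤ a2 := by
    by_contra h
    push_neg at h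
    have := hI2 i (i + 1) (by omega) (by omega) (by omega)
    omega
  have hb2 : i ≤ a1 + 1 := by
    by_contra h
    push_neg at h
    have h2i : 2 ≤ i := by omega
    have hd := hDm (i - 1) i (by omega) (by omega) hia2
    have := hiA h2i
    omega
  have hja1 : a1 ≤ j - 1 := by
    by_contra h
    push_neg at h
    have := hI1 (j - 1) j (by omega) (by omega) (by omega)
    omega
  have hja2 : j - 1 ≤ a2 := by
    by_contra h
    push_neg at h
    have := hI2 (j - 1) j (by omega) (by omega) hjn
    omega
  have hb3 : a2 ≤ j := by
    by_contra h
    push_neg at h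
    have hd := hDm j (j + 1) (by omega) (by omega) (by omega)
    have := hjA (by omega)
    omega
  -- characterization of descents
  have hDchar : ∀ d, 1 ≤ d → d + 1 ≤ n → (π (d + 1) < π d ↔ i ≤ d ∧ d ≤ j - 1) := by
    intro d hd1 hdn
    constructor
    · intro hdes'
      have hda1 : a1 ≤ d := by
        by_contra h
        push_neg at h
        have := hI1 d (d + 1) hd1 (by omega) (by omega)
        omega
      have hda2 : d ≤ a2 := by
        by_contra h
        push_neg at h
        have := hI2 d (d + 1) (by omega) (by omega) hdn
        omega
      constructor
      · by_contra h
        push_neg at h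
        have h2i : 2 ≤ i := by omega
        have h1 : d + 1 = i := by omega
        have h2 : d = i - 1 := by omega
        rw [h1, h2] at hdes'
        have := hiA h2i
        omega
      · by_contra h
        push_neg at h
        have hdj : d = j := by omega
        have := hjA (by omega)
        rw [hdj] at hdes'
        omega
    · rintro ⟨hid, hdj⟩
      rcases eq_or_lt_of_le hid with h | h
      · rw [← h]
        exact hiD
      · rcases eq_or_lt_of_le hdj with h' | h'
        · have h1 : d + 1 = j := by omega
          rw [h1, h']
          exact hjD
        · exact hDm d (d + 1) (by omega) (by omega) (by omega)
  -- characterization of segmentations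
  have hSeg : ∀ e1 e2, SegPMP n π e1 e2 ↔ ((e1 = i - 1 ∨ e1 = i) ∧ (e2 = j - 1 ∨ e2 = j)) := by
    intro e1 e2
    constructor
    · rintro ⟨he12, he2n, s1, s2, s3⟩
      have hE1 : e1 ≤ i := by
        by_contra h
        push_neg at h
        have := s1 i (i + 1) hi1 (by omega) (by omega)
        omega
      have hE2 : j - 1 ≤ e2 := by
        by_contra h
        push_neg at h
        have := s3 (j - 1) j (by omega) (by omega) hjn
        omega
      have hE3 : i - 1 ≤ e1 := by
        by_contra h
        push_neg at h
        have h2i : 2 ≤ i := by omega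
        have hd := s2 (i - 1) i (by omega) (by omega) (by omega)
        have := hiA h2i
        omega
      have hE4 : e2 ≤ j := by
        by_contra h
        push_neg at h
        have hd := s2 j (j + 1) (by omega) (by omega) (by omega)
        have := hjA (by omega)
        omega
      exact ⟨by omega, by omega⟩
    · rintro ⟨he1, he2⟩
      refine ⟨by omega, by omega, ?_, ?_, ?_⟩
      · refine chainInc π 1 e1 (fun k hk1 hk2 => dich k hk1 (by omega) ?_)
        intro hcon
        have := (hDchar k hk1 (by omega)).mp hcon
        omega
      · refine chainDec π (e1 + 1) e2 (fun k hk1 hk2 => ?_)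
        exact (hDchar k (by omega) (by omega)).mpr ⟨by omega, by omega⟩
      · refine chainInc π (e2 + 1) n (fun k hk1 hk2 => dich k (by omega) hk2 ?_)
        intro hcon
        have := (hDchar k (by omega) hk2).mp hcon
        omega
  constructor
  · intro e1 e2 hs
    exact (hSeg e1 e2).mp hs
  · have hset : {p : ℕ × ℕ | SegPMP n π p.1 p.2}
        = {(i - 1, j - 1), (i - 1, j), (i, j - 1), (i, j)} := by
      ext ⟨e1, e2⟩
      simp only [Set.mem_setOf_eq, Set.mem_insert_iff, Set.mem_singleton_iff, Prod.mk.injEq]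
      rw [hSeg e1 e2]
      omega
    have hne1 : ((i - 1 : ℕ), j - 1) ∉ ({(i - 1, j), (i, j - 1), (i, j)} : Set (ℕ × ℕ)) := by
      simp only [Set.mem_insert_iff, Set.mem_singleton_iff, Prod.mk.injEq]
      omega
    have hne2 : ((i - 1 : ℕ), j) ∉ ({(i, j - 1), (i, j)} : Set (ℕ × ℕ)) := by
      simp only [Set.mem_insert_iff, Set.mem_singleton_iff, Prod.mk.injEq]
      omega
    have hne3 : ((i : ℕ), j - 1) ≠ (i, j) := by
      simp only [ne_eq, Prod.mk.injEq]
      omega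
    rw [hset, Set.ncard_insert_of_notMem hne1 (Set.toFinite _),
      Set.ncard_insert_of_notMem hne2 (Set.toFinite _), Set.ncard_pair hne3]
end

section
/- Let n ≥ 2 and let π be a unimodal permutation of [n] (increasing then decreasing) with its maximum n at position i, where 2 ≤ i ≤ n−1. Then π has exactly 2(i+1) segmentations of type (+,+,−); precisely, the (+,+,−)-segmentations 0 ≤ e_1 ≤ e_2 ≤ n of π are: 0 ≤ j ≤ i−1 ≤ n for each 0 ≤ j ≤ i−1, 0 ≤ j ≤ i ≤ n for each 0 ≤ j ≤ i, and 0 ≤ i ≤ i+1 ≤ n. -/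
/-- `(e1, e2)` is a `(+,+,-)`-segmentation `0 ≤ e1 ≤ e2 ≤ n` of `π`: increasing on
positions `(0,e1]`, increasing on `(e1,e2]`, decreasing on `(e2,n]`. -/
def SegPPM (n : ℕ) (π : ℕ → ℕ) (e1 e2 : ℕ) : Prop :=
  e1 ≤ e2 ∧ e2 ≤ n ∧
  (∀ p q, 1 ≤ p → p < q → q ≤ e1 → π p < π q) ∧
  (∀ p q, e1 + 1 ≤ p → p < q → q ≤ e2 → π p < π q) ∧
  (∀ p q, e2 + 1 ≤ p → p < q → q ≤ n → π q < π p)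

/-- a unimodal permutation of `[n]` with maximum at position `i`,
`2 ≤ i ≤ n-1`, has exactly the `(+,+,-)`-segmentations `0 ≤ j ≤ i-1 ≤ n` (`0 ≤ j ≤ i-1`),
`0 ≤ j ≤ i ≤ n` (`0 ≤ j ≤ i`) and `0 ≤ i ≤ i+1 ≤ n`; in particular exactly `2(i+1)`. -/
theorem stmt_10 (n i : ℕ) (hn : 2 ≤ n) (π : ℕ → ℕ)
    (hperm : Set.BijOn π (Set.Icc 1 n) (Set.Icc 1 n))
    (hi1 : 2 ≤ i) (hi2 : i ≤ n - 1)
    (hup : ∀ p q, 1 ≤ p → p < q → q ≤ i → π p < π q)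
    (hdown : ∀ p q, i ≤ p → p < q → q ≤ n → π q < π p) :
    {p : ℕ × ℕ | SegPPM n π p.1 p.2} =
      {p : ℕ × ℕ | (p.1 ≤ i - 1 ∧ p.2 = i - 1) ∨ (p.1 ≤ i ∧ p.2 = i) ∨ p = (i, i + 1)} ∧
    Set.ncard {p : ℕ × ℕ | SegPPM n π p.1 p.2} = 2 * (i + 1) := by
  have hin : i + 1 ≤ n := by omega
  have hset : {p : ℕ × ℕ | SegPPM n π p.1 p.2} =
      {p : ℕ × ℕ | (p.1 ≤ i - 1 ∧ p.2 = i - 1) ∨ (p.1 ≤ i ∧ p.2 = i) ∨ p = (i, i + 1)} := by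
    ext ⟨e1, e2⟩
    simp only [Set.mem_setOf_eq, SegPPM]
    constructor
    · rintro ⟨h12, h2n, hA, hB, hC⟩
      have he1 : e1 ≤ i := by
        by_contra h
        push_neg at h
        exact absurd (hA i (i+1) (by omega) (by omega) (by omega))
          (not_lt.mpr (le_of_lt (hdown i (i+1) le_rfl (by omega) hin)))
      have he2low : i - 1 ≤ e2 := by
        by_contra h
        push_neg at h
        exact absurd (hup (e2+1) (e2+2) (by omega) (by omega) (by omega))
          (not_lt.mpr (le_of_lt (hC (e2+1) (e2+2) le_rfl (by omega) (by omega))))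
      have he2high : e2 ≤ i + 1 := by
        by_contra h
        push_neg at h
        rcases Nat.lt_or_ge e1 i with h1 | h1
        · exact absurd (hB i (i+1) (by omega) (by omega) (by omega))
            (not_lt.mpr (le_of_lt (hdown i (i+1) le_rfl (by omega) hin)))
        · exact absurd (hB (i+1) (i+2) (by omega) (by omega) (by omega))
            (not_lt.mpr (le_of_lt (hdown (i+1) (i+2) (by omega) (by omega) (by omega))))
      rcases (by omega : e2 = i - 1 ∨ e2 = i ∨ e2 = i + 1) with h | h | h
      · exact Or.inl ⟨by omega, h⟩
      · exact Or.inr (Or.inl ⟨by omega, h⟩)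
      · refine Or.inr (Or.inr ?_)
        have hge : i ≤ e1 := by
          by_contra h1
          push_neg at h1
          exact absurd (hB i (i+1) (by omega) (by omega) (by omega))
            (not_lt.mpr (le_of_lt (hdown i (i+1) le_rfl (by omega) hin)))
        have he : e1 = i := le_antisymm he1 hge
        simp [Prod.ext_iff, he, h]
    · rintro (⟨h1, h2⟩ | ⟨h1, h2⟩ | h)
      · subst h2
        exact ⟨by omega, by omega,
          fun p q hp hpq hq => hup p q hp hpq (by omega),
          fun p q hp hpq hq => hup p q (by omega) hpq (by omega),
          fun p q hp hpq hq => hdown p q (by omega) hpq hq⟩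
      · subst h2
        exact ⟨h1, by omega,
          fun p q hp hpq hq => hup p q hp hpq (by omega),
          fun p q hp hpq hq => hup p q (by omega) hpq hq,
          fun p q hp hpq hq => hdown p q (by omega) hpq hq⟩
      · obtain ⟨rfl, rfl⟩ : e1 = i ∧ e2 = i + 1 := by
          simpa [Prod.ext_iff] using h
        exact ⟨by omega, hin,
          fun p q hp hpq hq => hup p q hp hpq hq,
          fun p q hp hpq hq => absurd hq (by omega),
          fun p q hp hpq hq => hdown p q (by omega) hpq hq⟩
  refine ⟨hset, ?_⟩
  rw [hset]
  have hF : {p : ℕ × ℕ | (p.1 ≤ i - 1 ∧ p.2 = i - 1) ∨ (p.1 ≤ i ∧ p.2 = i) ∨ p = (i, i + 1)} =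
      ↑((((Finset.range i).image fun j => (j, i-1)) ∪
        ((Finset.range (i+1)).image fun j => (j, i))) ∪ {(i, i+1)}) := by
    ext ⟨a, b⟩
    simp only [Set.mem_setOf_eq, Finset.coe_union, Finset.coe_image, Finset.coe_singleton,
      Set.mem_union, Set.mem_image, Finset.mem_coe, Finset.mem_range, Set.mem_singleton_iff,
      Prod.ext_iff]
    constructor
    · rintro (⟨h1, h2⟩ | ⟨h1, h2⟩ | ⟨h1, h2⟩)
      · exact Or.inl (Or.inl ⟨a, by omega, rfl, h2.symm⟩)
      · exact Or.inl (Or.inr ⟨a, by omega, rfl, h2.symm⟩)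
      · exact Or.inr ⟨h1, h2⟩
    · rintro ((⟨x, hx, rfl, rfl⟩ | ⟨x, hx, rfl, rfl⟩) | ⟨rfl, rfl⟩)
      · exact Or.inl ⟨by omega, rfl⟩
      · exact Or.inr (Or.inl ⟨by omega, rfl⟩)
      · exact Or.inr (Or.inr ⟨rfl, rfl⟩)
  rw [hF, Set.ncard_coe_finset]
  have hinj1 : Function.Injective (fun j : ℕ => (j, i-1)) := fun a b h => by
    simpa using h
  have hinj2 : Function.Injective (fun j : ℕ => (j, i)) := fun a b h => by
    simpa using h
  have d1 : Disjoint ((Finset.range i).image fun j => (j, i-1))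
      ((Finset.range (i+1)).image fun j => (j, i)) := by
    simp only [Finset.disjoint_left, Finset.mem_image, Finset.mem_range]
    rintro ⟨a, b⟩ ⟨j, hj, hje⟩ ⟨k, hk, hke⟩
    simp only [Prod.mk.injEq] at hje hke
    omega
  have d2 : Disjoint (((Finset.range i).image fun j => (j, i-1)) ∪
      ((Finset.range (i+1)).image fun j => (j, i))) ({(i, i+1)} : Finset (ℕ × ℕ)) := by
    simp only [Finset.disjoint_right, Finset.mem_singleton, Finset.mem_union,
      Finset.mem_image, Finset.mem_range]
    rintro x rfl (⟨j, hj, hje⟩ | ⟨j, hj, hje⟩) <;>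
      simp only [Prod.mk.injEq] at hje <;> omega
  rw [Finset.card_union_of_disjoint d2, Finset.card_union_of_disjoint d1,
    Finset.card_image_of_injective _ hinj1, Finset.card_image_of_injective _ hinj2,
    Finset.card_range, Finset.card_range, Finset.card_singleton]
  omega
end

section
/- Let n ≥ 2 and let π be a unimodal permutation of [n] with its maximum at position i, where 2 ≤ i ≤ n−1. Then π has exactly 2(n−i+2) segmentations of type (+,−,−); precisely, the (+,−,−)-segmentations 0 ≤ e_1 ≤ e_2 ≤ n of π are: 0 ≤ i−1 ≤ j ≤ n for each i−1 ≤ j ≤ n, 0 ≤ i ≤ j ≤ n for each i ≤ j ≤ n, and 0 ≤ i−2 ≤ i−1 ≤ n. -/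
/-- `(e1, e2)` is a `(+,-,-)`-segmentation `0 ≤ e1 ≤ e2 ≤ n` of `π`: increasing on
positions `(0,e1]`, decreasing on `(e1,e2]`, decreasing on `(e2,n]`. -/
def SegPMM (n : ℕ) (π : ℕ → ℕ) (e1 e2 : ℕ) : Prop :=
  e1 ≤ e2 ∧ e2 ≤ n ∧
  (∀ p q, 1 ≤ p → p < q → q ≤ e1 → π p < π q) ∧
  (∀ p q, e1 + 1 ≤ p → p < q → q ≤ e2 → π q < π p) ∧
  (∀ p q, e2 + 1 ≤ p → p < q → q ≤ n → π q < π p)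

/-- a unimodal permutation of `[n]` with maximum at position `i`,
`2 ≤ i ≤ n-1`, has exactly the `(+,-,-)`-segmentations `0 ≤ i-1 ≤ j ≤ n` (`i-1 ≤ j ≤ n`),
`0 ≤ i ≤ j ≤ n` (`i ≤ j ≤ n`) and `0 ≤ i-2 ≤ i-1 ≤ n`; in particular exactly `2(n-i+2)`. -/
theorem stmt_11 (n i : ℕ) (hn : 2 ≤ n) (π : ℕ → ℕ)
    (hperm : Set.BijOn π (Set.Icc 1 n) (Set.Icc 1 n))
    (hi1 : 2 ≤ i) (hi2 : i ≤ n - 1)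
    (hup : ∀ p q, 1 ≤ p → p < q → q ≤ i → π p < π q)
    (hdown : ∀ p q, i ≤ p → p < q → q ≤ n → π q < π p) :
    {p : ℕ × ℕ | SegPMM n π p.1 p.2} =
      {p : ℕ × ℕ | (p.1 = i - 1 ∧ i - 1 ≤ p.2 ∧ p.2 ≤ n) ∨
        (p.1 = i ∧ i ≤ p.2 ∧ p.2 ≤ n) ∨ p = (i - 2, i - 1)} ∧
    Set.ncard {p : ℕ × ℕ | SegPMM n π p.1 p.2} = 2 * (n - i + 2) := by
  have hin : i ≤ n - 1 := hi2
  have hin' : i + 1 ≤ n := by omega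
  have heq : {p : ℕ × ℕ | SegPMM n π p.1 p.2} =
      {p : ℕ × ℕ | (p.1 = i - 1 ∧ i - 1 ≤ p.2 ∧ p.2 ≤ n) ∨
        (p.1 = i ∧ i ≤ p.2 ∧ p.2 ≤ n) ∨ p = (i - 2, i - 1)} := by
    ext ⟨e1, e2⟩
    simp only [Set.mem_setOf_eq, SegPMM, Prod.mk.injEq, Prod.ext_iff]
    constructor
    · rintro ⟨h12, h2n, hA, hB, hC⟩
      have he1i : e1 ≤ i := by
        by_contra h
        have h1 := hA i (i + 1) (by omega) (by omega) (by omega)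
        have h2 := hdown i (i + 1) le_rfl (by omega) (by omega)
        omega
      have he2 : i - 1 ≤ e2 := by
        by_contra h
        have h1 := hC (i - 1) i (by omega) (by omega) (by omega)
        have h2 := hup (i - 1) i (by omega) (by omega) le_rfl
        omega
      rcases eq_or_lt_of_le he1i with rfl | hlt
      · exact Or.inr (Or.inl ⟨rfl, h12, h2n⟩)
      rcases Nat.eq_or_lt_of_le (show e1 ≤ i - 1 by omega) with rfl | hlt2
      · exact Or.inl ⟨rfl, h12, h2n⟩
      have he2' : e2 ≤ e1 + 1 := by
        by_contra h
        have h1 := hB (e1 + 1) (e1 + 2) le_rfl (by omega) (by omega)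
        have h2 := hup (e1 + 1) (e1 + 2) (by omega) (by omega) (by omega)
        omega
      exact Or.inr (Or.inr ⟨by omega, by omega⟩)
    · rintro (⟨rfl, h2, h3⟩ | ⟨rfl, h2, h3⟩ | ⟨rfl, rfl⟩)
      · exact ⟨h2, h3, fun p q hp hpq hq => hup p q hp hpq (by omega),
          fun p q hp hpq hq => hdown p q (by omega) hpq (by omega),
          fun p q hp hpq hq => hdown p q (by omega) hpq hq⟩
      · exact ⟨h2, h3, fun p q hp hpq hq => hup p q hp hpq (by omega),
          fun p q hp hpq hq => hdown p q (by omega) hpq (by omega),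
          fun p q hp hpq hq => hdown p q (by omega) hpq hq⟩
      · exact ⟨by omega, by omega, fun p q hp hpq hq => hup p q hp hpq (by omega),
          fun p q hp hpq hq => by omega,
          fun p q hp hpq hq => hdown p q (by omega) hpq hq⟩
  refine ⟨heq, ?_⟩
  rw [heq]
  have hS : {p : ℕ × ℕ | (p.1 = i - 1 ∧ i - 1 ≤ p.2 ∧ p.2 ≤ n) ∨
        (p.1 = i ∧ i ≤ p.2 ∧ p.2 ≤ n) ∨ p = (i - 2, i - 1)} =
      ↑(((Finset.Icc (i - 1) n).image (fun j => ((i - 1 : ℕ), j)) ∪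
         (Finset.Icc i n).image (fun j => ((i : ℕ), j))) ∪ {((i - 2 : ℕ), (i - 1 : ℕ))}) := by
    ext ⟨a, b⟩
    simp only [Set.mem_setOf_eq, Finset.coe_union, Set.mem_union, Finset.coe_image,
      Set.mem_image, Finset.mem_coe, Finset.mem_Icc, Finset.coe_singleton,
      Set.mem_singleton_iff, Prod.mk.injEq, Prod.ext_iff]
    constructor
    · rintro (⟨rfl, h2, h3⟩ | ⟨rfl, h2, h3⟩ | ⟨rfl, rfl⟩)
      · exact Or.inl (Or.inl ⟨b, ⟨h2, h3⟩, rfl, rfl⟩)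
      · exact Or.inl (Or.inr ⟨b, ⟨h2, h3⟩, rfl, rfl⟩)
      · exact Or.inr ⟨rfl, rfl⟩
    · rintro ((⟨j, ⟨h1, h2⟩, rfl, rfl⟩ | ⟨j, ⟨h1, h2⟩, rfl, rfl⟩) | ⟨rfl, rfl⟩)
      · exact Or.inl ⟨rfl, h1, h2⟩
      · exact Or.inr (Or.inl ⟨rfl, h1, h2⟩)
      · exact Or.inr (Or.inr ⟨rfl, rfl⟩)
  rw [hS, Set.ncard_coe_finset]
  have hinj1 : Function.Injective (fun j : ℕ => ((i - 1 : ℕ), j)) :=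
    fun a b h => congrArg Prod.snd h
  have hinj2 : Function.Injective (fun j : ℕ => ((i : ℕ), j)) :=
    fun a b h => congrArg Prod.snd h
  rw [Finset.card_union_of_disjoint, Finset.card_union_of_disjoint,
    Finset.card_image_of_injective _ hinj1, Finset.card_image_of_injective _ hinj2,
    Finset.card_singleton, Nat.card_Icc, Nat.card_Icc]
  · omega
  · simp only [Finset.disjoint_left, Finset.mem_image, Finset.mem_Icc, Prod.mk.injEq]
    rintro ⟨a, b⟩ ⟨j, hj, rfl, rfl⟩ ⟨k, hk, hk2⟩
    have := (Prod.mk.injEq _ _ _ _).mp hk2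
    omega
  · simp only [Finset.disjoint_left, Finset.mem_union, Finset.mem_image, Finset.mem_Icc,
      Finset.mem_singleton, Prod.mk.injEq]
    rintro ⟨a, b⟩ (⟨j, hj, rfl, rfl⟩ | ⟨j, hj, rfl, rfl⟩) h <;>
      · have := (Prod.mk.injEq _ _ _ _).mp h
        omega
end

section
/- Let n ≥ 1 with n odd, and define Λ(n,i) = Σ_{j=1}^{i−1} (−1)^{i+j+1} L_2(n,j) where L_2(n,j) = (1/n) Σ_{d | gcd(n,j)} μ(d) C(n/d, j/d). Then Λ(n,i) = Λ(n, n−i+1) for all 1 ≤ i ≤ n. -/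
/-- `L_2(n,j) = (1/n) · Σ_{d | gcd(n,j)} μ(d) C(n/d, j/d)`. -/
noncomputable def L2q (n j : ℕ) : ℚ :=
  (1 / n) * ∑ d ∈ (Nat.gcd n j).divisors,
    (ArithmeticFunction.moebius d : ℚ) * ((n / d).choose (j / d) : ℚ)

/-- `Λ(n,i) = Σ_{j=1}^{i-1} (-1)^(i+j+1) L_2(n,j)`. -/
noncomputable def Lam (n i : ℕ) : ℚ :=
  ∑ j ∈ Finset.Icc 1 (i - 1), (-1 : ℚ) ^ (i + j + 1) * L2q n j

lemma my_gcd_sub (n j : ℕ) (hj : j ≤ n) : Nat.gcd n (n - j) = Nat.gcd n j := by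
  apply Nat.dvd_antisymm
  · refine Nat.dvd_gcd (Nat.gcd_dvd_left _ _) ?_
    have h := Nat.dvd_sub (Nat.gcd_dvd_left n (n - j)) (Nat.gcd_dvd_right n (n - j))
    rwa [Nat.sub_sub_self hj] at h
  · exact Nat.dvd_gcd (Nat.gcd_dvd_left _ _)
      (Nat.dvd_sub (Nat.gcd_dvd_left _ _) (Nat.gcd_dvd_right _ _))

lemma my_L2q_symm (n j : ℕ) (hj : j ≤ n) : L2q n (n - j) = L2q n j := by
  unfold L2q
  rw [my_gcd_sub n j hj]
  congr 1
  refine Finset.sum_congr rfl fun d hd => ?_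
  simp only [Nat.mem_divisors] at hd
  have hdpos : 0 < d := Nat.pos_of_mem_divisors (Nat.mem_divisors.mpr hd)
  have hdn : d ∣ n := hd.1.trans (Nat.gcd_dvd_left _ _)
  have hdj : d ∣ j := hd.1.trans (Nat.gcd_dvd_right _ _)
  obtain ⟨a, rfl⟩ := hdn
  obtain ⟨b, rfl⟩ := hdj
  have hba : b ≤ a := Nat.le_of_mul_le_mul_left hj hdpos
  rw [← Nat.mul_sub, Nat.mul_div_cancel_left _ hdpos, Nat.mul_div_cancel_left _ hdpos,
    Nat.mul_div_cancel_left _ hdpos, Nat.choose_symm hba]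

lemma my_pow_eq (a b : ℕ) (h : a % 2 = b % 2) : (-1 : ℚ) ^ a = (-1 : ℚ) ^ b := by
  rcases Nat.even_or_odd a with ha | ha <;> rcases Nat.even_or_odd b with hb | hb <;>
    simp_all [Nat.even_iff, Nat.odd_iff, Even.neg_one_pow, Odd.neg_one_pow]

lemma my_pow_neg (a b : ℕ) (h : a % 2 ≠ b % 2) : (-1 : ℚ) ^ a = -(-1 : ℚ) ^ b := by
  rcases Nat.even_or_odd a with ha | ha <;> rcases Nat.even_or_odd b with hb | hb <;>
    simp_all [Nat.even_iff, Nat.odd_iff, Even.neg_one_pow, Odd.neg_one_pow]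

lemma my_key (n : ℕ) (hn : 1 ≤ n) (hodd : Odd n) (i : ℕ) (hi : 1 ≤ i) (hin : i ≤ n)
    (h2 : 2 * i ≤ n + 1) : Lam n i = Lam n (n - i + 1) := by
  obtain ⟨m, hm⟩ := hodd
  unfold Lam
  have h1 : n - i + 1 - 1 = n - i := by omega
  rw [h1]
  have hsplit : Finset.Icc 1 (n - i) = Finset.Ioc 0 (n - i) := (Finset.Icc_add_one_left_eq_Ioc 0 _)
  have hsplit2 : Finset.Icc 1 (i - 1) = Finset.Ioc 0 (i - 1) := (Finset.Icc_add_one_left_eq_Ioc 0 _)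
  rw [hsplit, hsplit2,
    ← Finset.sum_Ioc_consecutive _ (Nat.zero_le (i - 1)) (by omega : i - 1 ≤ n - i)]
  have hz : ∑ j ∈ Finset.Ioc (i - 1) (n - i), (-1 : ℚ) ^ (n - i + 1 + j + 1) * L2q n j = 0 := by
    apply Finset.sum_involution (fun j _ => n - j)
    · intro j hj
      simp only [Finset.mem_Ioc] at hj
      have hsign : (-1 : ℚ) ^ (n - i + 1 + (n - j) + 1) = -(-1 : ℚ) ^ (n - i + 1 + j + 1) := by
        apply my_pow_neg; omega
      rw [hsign, my_L2q_symm n j (by omega), neg_mul, add_neg_cancel]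
    · intro j hj _
      simp only [Finset.mem_Ioc] at hj
      omega
    · intro j hj
      simp only [Finset.mem_Ioc] at hj ⊢
      omega
    · intro j hj
      simp only [Finset.mem_Ioc] at hj
      omega
  rw [hz, add_zero]
  refine Finset.sum_congr rfl fun j hj => ?_
  simp only [Finset.mem_Ioc] at hj
  congr 1
  apply my_pow_eq; omega

/-- for odd `n ≥ 1` and `1 ≤ i ≤ n`, `Λ(n,i) = Λ(n, n-i+1)`. -/
theorem stmt_13 (n : ℕ) (hn : 1 ≤ n) (hodd : Odd n) :
    ∀ i, 1 ≤ i → i ≤ n → Lam n i = Lam n (n - i + 1) := by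
  intro i hi hin
  by_cases h2 : 2 * i ≤ n + 1
  · exact my_key n hn hodd i hi hin h2
  · have h := my_key n hn hodd (n - i + 1) (by omega) (by omega) (by omega)
    have : n - (n - i + 1) + 1 = i := by omega
    rw [this] at h
    exact h.symm
end

section
/- Let σ and σ' be two finite sign sequences of the same length k such that σ' is the reverse of σ. For each n, the reverse map on permutations (sending π to π_n π_{n−1} … π_1 pre-composed appropriately) together with conjugation by the longest element induces a bijection between cyclic permutations of length n lying in the grid class S^σ and cyclic permutations of length n lying in the grid class S^{σ_r}. Hence |C_n^σ| = |C_n^{σ_r}|. -/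
/-- `π` admits a `σ`-segmentation: a monotone sequence `0 = e_0 ≤ ⋯ ≤ e_k = n` such that
the one-line word of `π` is increasing on each block where `σ` is `true` (`+`) and
decreasing on each block where `σ` is `false` (`-`). Positions are `0`-indexed. -/
def HasSeg {k n : ℕ} (σ : Fin k → Bool) (π : Equiv.Perm (Fin n)) : Prop :=
  ∃ e : Fin (k + 1) → ℕ, Monotone e ∧ e 0 = 0 ∧ e (Fin.last k) = n ∧
    ∀ i : Fin k, ∀ p q : Fin n, e i.castSucc ≤ (p : ℕ) → (p : ℕ) < (q : ℕ) →
      (q : ℕ) < e i.succ → (if σ i then π p < π q else π q < π p)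

/-- `π` is an `n`-cycle. -/
def IsNCycle {n : ℕ} (π : Equiv.Perm (Fin n)) : Prop :=
  π.IsCycle ∧ π.support = Finset.univ

lemma revPerm_inv (n : ℕ) : (Fin.revPerm : Equiv.Perm (Fin n))⁻¹ = Fin.revPerm := rfl

lemma isNCycle_conj {n : ℕ} {π : Equiv.Perm (Fin n)} (h : IsNCycle π) :
    IsNCycle (Fin.revPerm * π * Fin.revPerm) := by
  obtain ⟨hc, hs⟩ := h
  constructor
  · have := hc.conj (g := (Fin.revPerm : Equiv.Perm (Fin n)))
    rwa [revPerm_inv] at this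
  · have : (Fin.revPerm * π * (Fin.revPerm : Equiv.Perm (Fin n))⁻¹).support
        = Finset.map (Equiv.toEmbedding Fin.revPerm) π.support :=
      Equiv.Perm.support_conj
    rw [revPerm_inv] at this
    rw [this, hs]
    ext x
    simp

lemma hasSeg_conj {k n : ℕ} (σ : Fin k → Bool) (π : Equiv.Perm (Fin n)) (h : HasSeg σ π) :
    HasSeg (fun i => σ i.rev) (Fin.revPerm * π * Fin.revPerm) := by
  obtain ⟨e, emono, e0, elast, hseg⟩ := h
  have ele : ∀ j, e j ≤ n := fun j => elast ▸ emono (Fin.le_last j)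
  refine ⟨fun i => n - e i.rev, ?_, ?_, ?_, ?_⟩
  · intro i j hij
    exact Nat.sub_le_sub_left (emono (Fin.rev_le_rev.mpr hij)) n
  · simp only
    have : (0 : Fin (k+1)).rev = Fin.last k := by
      ext; simp [Fin.val_rev, Fin.last]
    rw [this, elast, Nat.sub_self]
  · simp only
    have : (Fin.last k).rev = 0 := by
      ext; simp [Fin.val_rev, Fin.last]
    rw [this, e0, Nat.sub_zero]
  · intro i p q hp hpq hq
    simp only [Fin.rev_castSucc, Fin.rev_succ] at hp hq
    -- positions of rev
    have hpn : (p : ℕ) < n := p.isLt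
    have hqn : (q : ℕ) < n := q.isLt
    have h1 : e i.rev.castSucc ≤ (q.rev : ℕ) := by
      rw [Fin.val_rev]
      have := ele i.rev.castSucc
      omega
    have h2 : (q.rev : ℕ) < (p.rev : ℕ) := by
      rw [Fin.val_rev, Fin.val_rev]; omega
    have h3 : (p.rev : ℕ) < e i.rev.succ := by
      rw [Fin.val_rev]
      have := ele i.rev.succ
      omega
    have key := hseg i.rev q.rev p.rev h1 h2 h3
    have happ : ∀ x : Fin n, (Fin.revPerm * π * Fin.revPerm : Equiv.Perm (Fin n)) x = (π x.rev).rev := by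
      intro x; rfl
    rw [happ p, happ q]
    by_cases hσ : σ i.rev
    · simp only [hσ, if_true] at key ⊢
      exact Fin.rev_lt_rev.mpr key
    · simp only [hσ, if_false, Bool.false_eq_true] at key ⊢
      exact Fin.rev_lt_rev.mpr key

/-- reversal of the signature preserves the number of `n`-cycles in the
grid class: `|C_n^σ| = |C_n^{σ_r}|`, where `σ_r i = σ (k - 1 - i)`. -/
theorem stmt_15 (k n : ℕ) (σ : Fin k → Bool) :
    Nat.card {π : Equiv.Perm (Fin n) // IsNCycle π ∧ HasSeg σ π} =
      Nat.card {π : Equiv.Perm (Fin n) // IsNCycle π ∧ HasSeg (fun i => σ i.rev) π} := by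
  apply Nat.card_congr
  have conj2 : ∀ π : Equiv.Perm (Fin n),
      Fin.revPerm * (Fin.revPerm * π * Fin.revPerm) * Fin.revPerm = π := by
    intro π
    ext x
    simp [Equiv.Perm.mul_apply]
  refine ⟨fun ⟨π, hc, hs⟩ => ⟨Fin.revPerm * π * Fin.revPerm, isNCycle_conj hc, hasSeg_conj σ π hs⟩,
    fun ⟨π, hc, hs⟩ => ⟨Fin.revPerm * π * Fin.revPerm, isNCycle_conj hc, ?_⟩, ?_, ?_⟩
  · have := hasSeg_conj (fun i => σ i.rev) π hs
    simpa [Fin.rev_rev] using this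
  · rintro ⟨π, hc, hs⟩
    simp only [Subtype.mk.injEq]
    exact conj2 π
  · rintro ⟨π, hc, hs⟩
    simp only [Subtype.mk.injEq]
    exact conj2 π
end

section
/- Let m ≥ 1 and let b(m) denote the number of ternary words of length m with an odd number of 1's, and a(m) the number of primitive ternary words of length m with an odd number of 1's. If m is odd, then b(m) = Σ_{d | m} a(m/d). -/
/-- `a(ℓ)`: the number of primitive ternary words of length `ℓ` with an odd number of ones. -/
noncomputable def aCount (ℓ : ℕ) : ℕ :=
  Nat.card {s : ZMod ℓ → Fin 3 // IsPrimitiveWord s ∧ Odd (numOnes3 s)}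

open Finset


lemma numOnes3_eq_s17 {n : ℕ} [NeZero n] (s : ZMod n → Fin 3) :
    numOnes3 s = (univ.filter fun i => s i = 1).card := by
  rw [numOnes3, Nat.card_eq_fintype_card, Fintype.card_subtype]

variable {m ℓ : ℕ}

lemma neZero_of_dvd [NeZero m] (h : ℓ ∣ m) : NeZero ℓ :=
  ⟨fun h0 => NeZero.ne m (by simpa [h0] using h)⟩

lemma cast_surj [NeZero m] (h : ℓ ∣ m) :
    Function.Surjective (ZMod.castHom h (ZMod ℓ)) := by
  haveI := neZero_of_dvd (m := m) h
  intro j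
  exact ⟨(j.val : ZMod m), by rw [map_natCast, ZMod.natCast_rightInverse j]⟩

lemma fiber_card [NeZero m] (h : ℓ ∣ m) (j : ZMod ℓ) :
    (univ.filter fun i : ZMod m => ZMod.castHom h (ZMod ℓ) i = j).card = m / ℓ := by
  haveI := neZero_of_dvd (m := m) h
  have hl : 0 < ℓ := Nat.pos_of_ne_zero (NeZero.ne ℓ)
  have key : ∀ i : ZMod m, ZMod.castHom h (ZMod ℓ) i = ((i.val : ℕ) : ZMod ℓ) := by
    intro i
    conv_lhs => rw [← ZMod.natCast_rightInverse i]
    rw [map_natCast]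
  rw [← Finset.card_range (m / ℓ)]
  symm
  apply Finset.card_bij (fun t _ => ((j.val + ℓ * t : ℕ) : ZMod m))
  · intro t ht
    simp only [mem_filter, mem_univ, true_and, map_natCast]
    push_cast
    simp [ZMod.natCast_rightInverse j, ZMod.natCast_self]
  · intro t1 h1 t2 h2 heq
    simp only [mem_range] at h1 h2
    have hlt : ∀ t, t < m / ℓ → j.val + ℓ * t < m := by
      intro t ht
      calc j.val + ℓ * t < ℓ + ℓ * t := by
            exact Nat.add_lt_add_right (ZMod.val_lt j) _
        _ = ℓ * (t + 1) := by ring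
        _ ≤ ℓ * (m / ℓ) := Nat.mul_le_mul_left _ (by omega)
        _ = m := Nat.mul_div_cancel' h
    have := congrArg ZMod.val heq
    rw [ZMod.val_natCast_of_lt (hlt _ h1), ZMod.val_natCast_of_lt (hlt _ h2)] at this
    exact Nat.eq_of_mul_eq_mul_left hl (by omega)
  · intro i hi
    simp only [mem_filter, mem_univ, true_and] at hi
    rw [key i] at hi
    have hval : i.val % ℓ = j.val := by
      have := congrArg ZMod.val hi
      rwa [ZMod.val_natCast] at this
    refine ⟨i.val / ℓ, ?_, ?_⟩
    · simp only [mem_range]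
      exact Nat.div_lt_div_of_lt_of_dvd h (ZMod.val_lt i)
    · rw [← hval, Nat.mod_add_div, ZMod.natCast_rightInverse i]

lemma numOnes_comp [NeZero m] (h : ℓ ∣ m) (q : ZMod ℓ → Fin 3) :
    numOnes3 (fun i => q (ZMod.castHom h (ZMod ℓ) i)) = (m / ℓ) * numOnes3 q := by
  haveI := neZero_of_dvd (m := m) h
  rw [numOnes3_eq_s17, numOnes3_eq_s17]
  rw [Finset.card_eq_sum_card_fiberwise
    (f := fun i => ZMod.castHom h (ZMod ℓ) i) (t := univ.filter fun j => q j = 1)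
    (fun x hx => by simpa using (mem_filter.mp hx).2)]
  rw [Finset.sum_congr rfl (fun j hj => ?_), Finset.sum_const, smul_eq_mul, mul_comm]
  have hj1 : q j = 1 := (mem_filter.mp hj).2
  rw [← fiber_card h j]
  congr 1
  ext i
  simp only [mem_filter, mem_univ, true_and, and_iff_right_iff_imp]
  intro hi; rw [hi, hj1]

lemma period_iff [NeZero m] (h : ℓ ∣ m) (q : ZMod ℓ → Fin 3) (hq : IsPrimitiveWord q)
    (t : ZMod m) :
    (fun i => q (ZMod.castHom h (ZMod ℓ) (i + t))) = (fun i => q (ZMod.castHom h (ZMod ℓ) i)) ↔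
      ZMod.castHom h (ZMod ℓ) t = 0 := by
  constructor
  · intro H
    by_contra h0
    apply hq (ZMod.castHom h (ZMod ℓ) t) h0
    funext j
    obtain ⟨i, rfl⟩ := cast_surj h j
    simpa [map_add] using congrFun H i
  · intro h0
    funext i
    rw [map_add, h0, add_zero]

lemma exists_root (hm : m ≠ 0) (s : ZMod m → Fin 3) :
    ∃ d, ∃ (hd : d ∣ m) (q : ZMod d → Fin 3), IsPrimitiveWord q ∧
      s = fun i => q (ZMod.castHom hd (ZMod d) i) := by
  haveI : NeZero m := ⟨hm⟩
  set P : ℕ → Prop := fun t => ∀ x : ZMod m, s (x + (t : ZMod m)) = s x with hP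
  have Pm : ∃ t, 0 < t ∧ P t := ⟨m, Nat.pos_of_ne_zero hm, fun x => by simp⟩
  classical
  set d := Nat.find Pm with hd
  obtain ⟨hd1, hPd⟩ : 0 < d ∧ P d := Nat.find_spec Pm
  have Padd : ∀ a b, P a → P b → P (a + b) := by
    intro a b ha hb x
    rw [Nat.cast_add, ← add_assoc, hb, ha]
  have Pmul : ∀ k, P (d * k) := by
    intro k
    induction k with
    | zero => intro x; simp
    | succ n ih => rw [Nat.mul_succ]; exact Padd _ _ ih hPd
  have Psub : ∀ a b, P a → P (a + b) → P b := by
    intro a b ha hab x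
    have h1 := hab x
    rw [Nat.cast_add, ← add_assoc, add_right_comm, ha (x + (b : ZMod m))] at h1
    exact h1
  have hdvd : d ∣ m := by
    have Pv : P (m % d) := by
      apply Psub (d * (m / d))
      · exact Pmul _
      · rw [Nat.div_add_mod]; exact fun x => by simp
    rcases Nat.eq_zero_or_pos (m % d) with h0 | hpos
    · exact Nat.dvd_of_mod_eq_zero h0
    · exact absurd ⟨hpos, Pv⟩ (Nat.find_min Pm (Nat.mod_lt _ hd1))
  haveI := neZero_of_dvd (m := m) hdvd
  set q : ZMod d → Fin 3 := fun j => s ((j.val : ZMod m)) with hqdef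
  have key : ∀ i : ZMod m, ZMod.castHom hdvd (ZMod d) i = ((i.val : ℕ) : ZMod d) := by
    intro i
    conv_lhs => rw [← ZMod.natCast_rightInverse i]
    rw [map_natCast]
  have hs : s = fun i => q (ZMod.castHom hdvd (ZMod d) i) := by
    funext i
    rw [key i]
    show s i = s ((((i.val : ℕ) : ZMod d)).val : ZMod m)
    rw [ZMod.val_natCast]
    have h1 := Pmul (i.val / d) (((i.val % d : ℕ) : ZMod m))
    rw [← Nat.cast_add, Nat.mod_add_div, ZMod.natCast_rightInverse i] at h1
    exact h1
  refine ⟨d, hdvd, q, ?_, hs⟩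
  intro r hr Heq
  have ht0 : 0 < r.val := Nat.pos_of_ne_zero (fun h0 => hr (by
    rwa [← ZMod.val_eq_zero]))
  have htd : r.val < d := ZMod.val_lt r
  apply Nat.find_min Pm htd
  refine ⟨ht0, fun x => ?_⟩
  rw [hs]
  simp only
  rw [map_add, map_natCast, ZMod.natCast_rightInverse r]
  exact congrFun Heq _

lemma dvd_of_eq_words [NeZero m] {ℓ₁ ℓ₂ : ℕ} (h₁ : ℓ₁ ∣ m) (h₂ : ℓ₂ ∣ m)
    (q₁ : ZMod ℓ₁ → Fin 3) (q₂ : ZMod ℓ₂ → Fin 3) (hq₁ : IsPrimitiveWord q₁)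
    (hs : (fun i => q₁ (ZMod.castHom h₁ (ZMod ℓ₁) i)) =
      fun i => q₂ (ZMod.castHom h₂ (ZMod ℓ₂) i)) :
    ℓ₁ ∣ ℓ₂ := by
  haveI := neZero_of_dvd (m := m) h₁
  haveI := neZero_of_dvd (m := m) h₂
  have hshift : (fun i => q₁ (ZMod.castHom h₁ (ZMod ℓ₁) (i + (ℓ₂ : ZMod m)))) =
      fun i => q₁ (ZMod.castHom h₁ (ZMod ℓ₁) i) := by
    funext i
    rw [congrFun hs (i + (ℓ₂ : ZMod m)), congrFun hs i, map_add, map_natCast,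
      ZMod.natCast_self, add_zero]
  have := (period_iff h₁ q₁ hq₁ ((ℓ₂ : ZMod m))).mp hshift
  rw [map_natCast] at this
  exact (ZMod.natCast_eq_zero_iff _ _).mp this

lemma odd_lift [NeZero m] (hodd : Odd m) (h : ℓ ∣ m) (q : ZMod ℓ → Fin 3) :
    Odd (numOnes3 (fun i => q (ZMod.castHom h (ZMod ℓ) i))) ↔ Odd (numOnes3 q) := by
  have hdm : m / ℓ * ℓ = m := Nat.div_mul_cancel h
  have ho : Odd (m / ℓ) := (Nat.odd_mul.mp (hdm ▸ hodd)).1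
  rw [numOnes_comp h q, Nat.odd_mul]
  simp [ho]

/-- for odd `m ≥ 1`, the number of ternary words of length `m` with an odd
number of ones equals `Σ_{d | m} a(m/d)`. -/
theorem stmt_17 (m : ℕ) (hm : 1 ≤ m) (hodd : Odd m) :
    Nat.card {s : ZMod m → Fin 3 // Odd (numOnes3 s)} =
      ∑ d ∈ m.divisors, aCount (m / d) := by
  have hm0 : m ≠ 0 := by omega
  haveI : NeZero m := ⟨hm0⟩
  classical
  have key : Nat.card {s : ZMod m → Fin 3 // Odd (numOnes3 s)} =
      Nat.card (Σ ℓ : {d // d ∈ m.divisors},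
        {q : ZMod ℓ.1 → Fin 3 // IsPrimitiveWord q ∧ Odd (numOnes3 q)}) := by
    refine (Nat.card_eq_of_bijective
      (fun x => ⟨fun i => x.2.1 (ZMod.castHom (Nat.mem_divisors.mp x.1.2).1 (ZMod x.1.1) i),
        (odd_lift hodd _ _).mpr x.2.2.2⟩) ⟨?_, ?_⟩).symm
    · rintro ⟨⟨ℓ₁, hℓ₁⟩, q₁, hq₁, ho₁⟩ ⟨⟨ℓ₂, hℓ₂⟩, q₂, hq₂, ho₂⟩ hxy
      simp only [Subtype.mk.injEq] at hxy
      have hd₁ := (Nat.mem_divisors.mp hℓ₁).1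
      have hd₂ := (Nat.mem_divisors.mp hℓ₂).1
      have hll : ℓ₁ = ℓ₂ := Nat.dvd_antisymm
        (dvd_of_eq_words hd₁ hd₂ q₁ q₂ hq₁ hxy)
        (dvd_of_eq_words hd₂ hd₁ q₂ q₁ hq₂ hxy.symm)
      subst hll
      have hq : q₁ = q₂ := by
        funext j
        obtain ⟨i, rfl⟩ := cast_surj hd₁ j
        exact congrFun hxy i
      subst hq
      rfl
    · rintro ⟨s, hs⟩
      obtain ⟨d, hd, q, hq, rfl⟩ := exists_root hm0 s
      have hmem : d ∈ m.divisors := Nat.mem_divisors.mpr ⟨hd, hm0⟩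
      exact ⟨⟨⟨d, hmem⟩, q, hq, (odd_lift hodd hd q).mp hs⟩, rfl⟩
  haveI : ∀ ℓ : {d // d ∈ m.divisors}, NeZero ℓ.1 :=
    fun ℓ => ⟨(Nat.pos_of_mem_divisors ℓ.2).ne'⟩
  rw [key, Nat.card_eq_fintype_card, Fintype.card_sigma, Nat.sum_div_divisors m aCount]
  have hc : ∀ ℓ : {d // d ∈ m.divisors},
      Fintype.card {q : ZMod ℓ.1 → Fin 3 // IsPrimitiveWord q ∧ Odd (numOnes3 q)} =
        aCount ℓ.1 := fun ℓ => (Nat.card_eq_fintype_card).symm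
  rw [Finset.sum_congr rfl (fun ℓ _ => hc ℓ), Finset.sum_coe_sort m.divisors aCount]
end
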